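/- arXiv:2106.02728 — 6 statements merged into one kernel-verified Lean document; each statement's English description precedes it below -/
import Mathlib

section
/- Let Z = ℝ^N × ℝ^N be equipped with a norm ‖·‖ induced by an inner product, let E be an affine subspace of Z and let D be a non-empty closed subset of Z. Suppose there exist constants c > 0 and b ≥ 0 such that ‖y − z‖ ≥ c(‖y‖ + ‖z‖) − b for all y ∈ D and z ∈ E. Then the Data-Driven problem inf_{y ∈ D} inf_{z ∈ E} ‖y − z‖² has at least one solution: there exist y ∈ D and z ∈ E with ‖y − z‖² = inf_{(y',z') ∈ D × E} ‖y' − z'‖². -/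
/-- **Existence of Data-Driven solutions.**
Let `Z` be a finite-dimensional real inner product space (e.g. `ℝ^N × ℝ^N` with a norm
induced by an inner product), `E` a nonempty affine subspace of `Z` and `D` a nonempty
closed subset of `Z`.  If there are constants `c > 0` and `b ≥ 0` with
`‖y − z‖ ≥ c (‖y‖ + ‖z‖) − b` for all `y ∈ D`, `z ∈ E`, then the Data-Driven problem
`inf_{y ∈ D} inf_{z ∈ E} ‖y − z‖²` has at least one solution. -/
theorem dataDriven_existence
    {Z : Type*} [NormedAddCommGroup Z] [InnerProductSpace ℝ Z] [FiniteDimensional ℝ Z]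
    (E : AffineSubspace ℝ Z) (hE : (E : Set Z).Nonempty)
    (D : Set Z) (hDne : D.Nonempty) (hDcl : IsClosed D)
    (c b : ℝ) (hc : 0 < c) (hb : 0 ≤ b)
    (hcoer : ∀ y ∈ D, ∀ z ∈ E, c * (‖y‖ + ‖z‖) - b ≤ ‖y - z‖) :
    ∃ y ∈ D, ∃ z ∈ (E : Set Z), ‖y - z‖ ^ 2 =
      ⨅ p : D × (E : Set Z), ‖(p.1 : Z) - (p.2 : Z)‖ ^ 2 := by
  obtain ⟨z0, hz0⟩ := hE
  obtain ⟨y0, hy0⟩ := hDne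
  set S : Set (Z × Z) := D ×ˢ (E : Set Z) with hS
  have hScl : IsClosed S := hDcl.prod E.closed_of_finiteDimensional
  have hp0 : ((y0, z0) : Z × Z) ∈ S := ⟨hy0, hz0⟩
  set R : ℝ := (b + ‖y0 - z0‖ + 1) / c with hR
  have hcont : Continuous fun p : Z × Z => ‖p.1 - p.2‖ ^ 2 := by fun_prop
  have key : ∀ p ∈ S, c * ‖p‖ - b ≤ ‖p.1 - p.2‖ := by
    intro p hp
    have h := hcoer p.1 hp.1 p.2 hp.2
    have hle : ‖p‖ ≤ ‖p.1‖ + ‖p.2‖ := by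
      rw [Prod.norm_def]
      exact max_le (le_add_of_nonneg_right (norm_nonneg _))
        (le_add_of_nonneg_left (norm_nonneg _))
    nlinarith
  have hp0R : ‖((y0, z0) : Z × Z)‖ ≤ R := by
    have h := key _ hp0
    rw [hR, le_div_iff₀ hc]
    nlinarith [norm_nonneg (y0 - z0)]
  set K : Set (Z × Z) := S ∩ Metric.closedBall 0 R with hK
  have hKc : IsCompact K := (isCompact_closedBall (0 : Z × Z) R).inter_left hScl
  have hKne : ((y0, z0) : Z × Z) ∈ K :=
    ⟨hp0, by simpa [Metric.mem_closedBall, dist_zero_right] using hp0R⟩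
  obtain ⟨x, hxK, hxmin⟩ := hKc.exists_isMinOn ⟨_, hKne⟩ hcont.continuousOn
  have hglobal : ∀ q ∈ S, ‖x.1 - x.2‖ ^ 2 ≤ ‖q.1 - q.2‖ ^ 2 := by
    intro q hq
    by_cases hqR : ‖q‖ ≤ R
    · exact hxmin ⟨hq, by simpa [Metric.mem_closedBall, dist_zero_right] using hqR⟩
    · push_neg at hqR
      have h1 : ‖y0 - z0‖ + 1 ≤ ‖q.1 - q.2‖ := by
        have hk := key q hq
        have hcR : c * R = b + ‖y0 - z0‖ + 1 := by
          rw [hR]; field_simp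
        nlinarith
      have h2 : ‖x.1 - x.2‖ ^ 2 ≤ ‖y0 - z0‖ ^ 2 := hxmin hKne
      nlinarith [norm_nonneg (y0 - z0)]
  have : Nonempty (D × (E : Set Z)) := ⟨⟨⟨y0, hy0⟩, ⟨z0, hz0⟩⟩⟩
  refine ⟨x.1, hxK.1.1, x.2, hxK.1.2, le_antisymm ?_ ?_⟩
  · exact le_ciInf fun p => hglobal (p.1, p.2) ⟨p.1.2, p.2.2⟩
  · exact ciInf_le ⟨0, by rintro r ⟨p, rfl⟩; positivity⟩
      (⟨⟨x.1, hxK.1.1⟩, ⟨x.2, hxK.1.2⟩⟩ : D × (E : Set Z))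
end

section
/- Let μ be a Radon measure on Z × Z such that μ_β is a finite measure for all β > β* for some β* ≥ 0, and suppose the thermalized measures μ_β converge weakly to a finite measure μ_∞ as β → +∞ (i.e. μ has a diagonal concentration μ_∞). Then μ_∞ is supported on the diagonal: μ_∞((Z × Z) \ diag(Z × Z)) = 0, where diag(Z × Z) = {(y,y) : y ∈ Z}. -/
open MeasureTheory Filter Topology Real

noncomputable section

/-- Phase space `Z = ℝ^{2N}` with its Euclidean (inner-product) norm. -/
abbrev Zsp (N : ℕ) : Type := EuclideanSpace ℝ (Fin (2 * N))

/-- Normalization constant `B_β = ∫_Z exp (−β ‖ξ‖²) dξ`. -/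
def Bconst (N : ℕ) (β : ℝ) : ℝ := ∫ ξ : Zsp N, Real.exp (-β * ‖ξ‖ ^ 2)

/-- Thermalized measure `μ_β = w_β · μ` with density `w_β(y,z) = B_β⁻¹ exp (−β ‖y − z‖²)`. -/
def thermal {N : ℕ} (μ : Measure (Zsp N × Zsp N)) (β : ℝ) : Measure (Zsp N × Zsp N) :=
  μ.withDensity fun p => ENNReal.ofReal ((Bconst N β)⁻¹ * Real.exp (-β * ‖p.1 - p.2‖ ^ 2))

lemma Bconst_eq (N : ℕ) {β : ℝ} (hβ : 0 < β) : Bconst N β = (π / β) ^ N := by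
  rw [Bconst, GaussianFourier.integral_rexp_neg_mul_sq_norm hβ, finrank_euclideanSpace_fin]
  rw [show (((2 * N : ℕ) : ℝ) / 2) = (N : ℝ) by push_cast; ring, Real.rpow_natCast]

lemma Bconst_pos (N : ℕ) {β : ℝ} (hβ : 0 < β) : 0 < Bconst N β := by
  rw [Bconst_eq N hβ]
  positivity

lemma pow_mul_exp_tendsto (n : ℕ) {a : ℝ} (ha : 0 < a) :
    Tendsto (fun β : ℝ => β ^ n * Real.exp (-(a * β))) atTop (nhds 0) := by
  have h := ((tendsto_pow_mul_exp_neg_atTop_nhds_zero n).comp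
    (tendsto_id.const_mul_atTop ha)).const_mul ((a : ℝ) ^ n)⁻¹
  rw [mul_zero] at h
  refine h.congr fun β => ?_
  simp only [Function.comp, mul_pow, id]
  field_simp

lemma thermal_far_tendsto {N : ℕ} (μ : Measure (Zsp N × Zsp N))
    (βstar : ℝ) (hβstar : 0 ≤ βstar)
    (hfin : ∀ β > βstar, IsFiniteMeasure (thermal μ β))
    {δ : ℝ} (hδ : 0 < δ) :
    Tendsto (fun β : ℝ => ((thermal μ β) {p : Zsp N × Zsp N | δ ≤ ‖p.1 - p.2‖}).toReal)
      atTop (nhds 0) := by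
  set S : Set (Zsp N × Zsp N) := {p | δ ≤ ‖p.1 - p.2‖} with hSdef
  have hS : MeasurableSet S :=
    (isClosed_le continuous_const (continuous_fst.sub continuous_snd).norm).measurableSet
  set β₀ : ℝ := βstar + 1 with hβ₀def
  have hβ₀ : βstar < β₀ := by simp [hβ₀def]
  have hβ₀pos : 0 < β₀ := lt_of_le_of_lt hβstar hβ₀
  haveI := hfin β₀ hβ₀
  have hM : (thermal μ β₀) S ≠ ⊤ := measure_ne_top _ _
  set M : ℝ := ((thermal μ β₀) S).toReal with hMdef
  -- the comparison constant
  set c : ℝ → ℝ := fun β => (Bconst N β)⁻¹ * Bconst N β₀ * Real.exp (-(β - β₀) * δ ^ 2)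
    with hcdef
  have hc_nonneg : ∀ β, 0 < β → 0 ≤ c β := fun β hβ => by
    have := Bconst_pos N hβ
    have := Bconst_pos N hβ₀pos
    positivity
  -- key measure bound
  have key : ∀ β : ℝ, β₀ ≤ β →
      (thermal μ β) S ≤ ENNReal.ofReal (c β) * (thermal μ β₀) S := by
    intro β hβ
    have hβpos : 0 < β := lt_of_lt_of_le hβ₀pos hβ
    have hB : 0 < Bconst N β := Bconst_pos N hβpos
    have hB0 : 0 < Bconst N β₀ := Bconst_pos N hβ₀pos
    rw [thermal, thermal, withDensity_apply _ hS, withDensity_apply _ hS,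
      ← lintegral_const_mul' _ _ ENNReal.ofReal_ne_top]
    refine setLIntegral_mono_ae (by fun_prop) ?_
    filter_upwards with p hp
    rw [← ENNReal.ofReal_mul (hc_nonneg β hβpos)]
    apply ENNReal.ofReal_le_ofReal
    set d : ℝ := ‖p.1 - p.2‖ with hddef
    have hd : δ ≤ d := hp
    have hexp : Real.exp (-β * d ^ 2) ≤
        Real.exp (-(β - β₀) * δ ^ 2) * Real.exp (-β₀ * d ^ 2) := by
      rw [← Real.exp_add]
      apply Real.exp_le_exp.2
      nlinarith [mul_nonneg (sub_nonneg.2 hβ)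
        (sub_nonneg.2 (pow_le_pow_left₀ hδ.le hd 2))]
    have heq : c β * ((Bconst N β₀)⁻¹ * Real.exp (-β₀ * d ^ 2)) =
        (Bconst N β)⁻¹ * (Real.exp (-(β - β₀) * δ ^ 2) * Real.exp (-β₀ * d ^ 2)) := by
      simp only [hcdef]
      rw [show (Bconst N β)⁻¹ * Bconst N β₀ * Real.exp (-(β - β₀) * δ ^ 2) *
          ((Bconst N β₀)⁻¹ * Real.exp (-β₀ * d ^ 2)) =
          (Bconst N β₀ * (Bconst N β₀)⁻¹) *
            ((Bconst N β)⁻¹ * (Real.exp (-(β - β₀) * δ ^ 2) * Real.exp (-β₀ * d ^ 2))) from by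
          ring, mul_inv_cancel₀ hB0.ne', one_mul]
    rw [heq]
    exact mul_le_mul_of_nonneg_left hexp (inv_nonneg.2 hB.le)
  -- real-valued bound
  have keyR : ∀ β : ℝ, β₀ ≤ β → ((thermal μ β) S).toReal ≤ c β * M := by
    intro β hβ
    have hβpos : 0 < β := lt_of_lt_of_le hβ₀pos hβ
    have h := ENNReal.toReal_mono (by
      exact ENNReal.mul_ne_top ENNReal.ofReal_ne_top hM) (key β hβ)
    rwa [ENNReal.toReal_mul, ENNReal.toReal_ofReal (hc_nonneg β hβpos)] at h
  -- tendsto of the bound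
  have hbound : Tendsto (fun β : ℝ => c β * M) atTop (nhds 0) := by
    have h0 := (pow_mul_exp_tendsto N (show (0:ℝ) < δ ^ 2 by positivity)).const_mul
      ((π / β₀) ^ N / π ^ N * Real.exp (β₀ * δ ^ 2) * M)
    rw [mul_zero] at h0
    refine h0.congr' ?_
    filter_upwards [eventually_ge_atTop (max β₀ 1)] with β hβ
    have hβpos : 0 < β := lt_of_lt_of_le one_pos (le_of_max_le_right hβ)
    have hπ : (0:ℝ) < π := Real.pi_pos
    rw [hcdef]
    simp only
    rw [Bconst_eq N hβpos, Bconst_eq N hβ₀pos,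
      show (-(β - β₀) * δ ^ 2) = β₀ * δ ^ 2 + -(δ ^ 2 * β) by ring, Real.exp_add,
      div_pow, div_pow]
    field_simp
  -- squeeze
  refine squeeze_zero' (Eventually.of_forall fun β => ENNReal.toReal_nonneg) ?_ hbound
  filter_upwards [eventually_ge_atTop β₀] with β hβ using keyR β hβ


/-- **Lemma (diagonal concentration is diagonal).**  If the thermalizations `μ_β` of a Radon
measure `μ` on `Z × Z` are finite for `β > β*` and converge weakly (against bounded continuous
functions) to a finite measure `μ∞` as `β → +∞`, then `μ∞` is supported on the diagonal. -/
theorem diagonalConcentration_supported_on_diag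
    {N : ℕ} (hN : 0 < N)
    (μ : Measure (Zsp N × Zsp N)) [IsLocallyFiniteMeasure μ]
    (βstar : ℝ) (hβstar : 0 ≤ βstar)
    (hfin : ∀ β > βstar, IsFiniteMeasure (thermal μ β))
    (μinf : Measure (Zsp N × Zsp N)) [IsFiniteMeasure μinf]
    (hconv : ∀ f : BoundedContinuousFunction (Zsp N × Zsp N) ℝ,
      Filter.Tendsto (fun β : ℝ => ∫ p, f p ∂(thermal μ β)) Filter.atTop
        (nhds (∫ p, f p ∂μinf))) :
    μinf {p : Zsp N × Zsp N | p.1 ≠ p.2} = 0 := by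
  have claim : ∀ δ : ℝ, 0 < δ → μinf {p : Zsp N × Zsp N | δ ≤ ‖p.1 - p.2‖} = 0 := by
    intro δ hδ
    set C : Set (Zsp N × Zsp N) := {p | δ ≤ ‖p.1 - p.2‖} with hCdef
    have hC : MeasurableSet C :=
      (isClosed_le continuous_const (continuous_fst.sub continuous_snd).norm).measurableSet
    set S : Set (Zsp N × Zsp N) := {p | δ / 2 ≤ ‖p.1 - p.2‖} with hSdef
    have hS : MeasurableSet S :=
      (isClosed_le continuous_const (continuous_fst.sub continuous_snd).norm).measurableSet
    -- the test function
    set g : Zsp N × Zsp N → ℝ :=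
      fun p => min 1 (max 0 (2 / δ * ‖p.1 - p.2‖ - 1)) with hgdef
    have hcont : Continuous g :=
      continuous_const.min (continuous_const.max
        ((continuous_const.mul (continuous_fst.sub continuous_snd).norm).sub continuous_const))
    have hg01 : ∀ p, 0 ≤ g p ∧ g p ≤ 1 := fun p =>
      ⟨le_min zero_le_one (le_max_left 0 _), min_le_left _ _⟩
    set f : BoundedContinuousFunction (Zsp N × Zsp N) ℝ :=
      BoundedContinuousFunction.ofNormedAddCommGroup g hcont 1 (fun p => by
        rw [Real.norm_eq_abs, abs_le]
        exact ⟨by linarith [(hg01 p).1], (hg01 p).2⟩) with hfdef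
    have hf_eq : ∀ p, f p = g p := fun p => rfl
    -- f = 1 on C
    have hfC : ∀ p ∈ C, f p = 1 := by
      intro p hp
      have hd : δ ≤ ‖p.1 - p.2‖ := hp
      have h1 : (1 : ℝ) ≤ 2 / δ * ‖p.1 - p.2‖ - 1 := by
        rw [div_mul_eq_mul_div, le_sub_iff_add_le, le_div_iff₀ hδ]
        linarith
      rw [hf_eq, hgdef]
      exact min_eq_left (le_trans h1 (le_max_right 0 _))
    -- f ≤ indicator of S
    have hfS : ∀ p, f p ≤ S.indicator (fun _ => (1 : ℝ)) p := by
      intro p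
      by_cases hp : p ∈ S
      · rw [Set.indicator_of_mem hp]
        exact (hg01 p).2
      · rw [Set.indicator_of_notMem hp]
        have hd : ‖p.1 - p.2‖ < δ / 2 := lt_of_not_ge hp
        have hx : 2 / δ * ‖p.1 - p.2‖ - 1 ≤ 0 := by
          have h1 : 2 / δ * ‖p.1 - p.2‖ ≤ 2 / δ * (δ / 2) :=
            mul_le_mul_of_nonneg_left hd.le (by positivity)
          have h2 : 2 / δ * (δ / 2) = 1 := by field_simp
          linarith
        rw [hf_eq, hgdef]
        simp only
        rw [max_eq_left hx, min_eq_right zero_le_one]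
    -- indicator of C ≤ f
    have hCf : ∀ p, C.indicator (fun _ => (1 : ℝ)) p ≤ f p := by
      intro p
      by_cases hp : p ∈ C
      · rw [Set.indicator_of_mem hp, hfC p hp]
      · rw [Set.indicator_of_notMem hp]
        exact (hg01 p).1
    -- ∫ f ∂(thermal μ β) ≤ thermal measure of S
    have hbnd : ∀ β > βstar, (∫ p, f p ∂(thermal μ β)) ≤ ((thermal μ β) S).toReal := by
      intro β hβ
      haveI := hfin β hβ
      calc (∫ p, f p ∂(thermal μ β))
          ≤ ∫ p, S.indicator (fun _ => (1 : ℝ)) p ∂(thermal μ β) :=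
            integral_mono (f.integrable _) ((integrable_const 1).indicator hS) hfS
        _ = ((thermal μ β) S).toReal := by
            rw [integral_indicator hS]
            simp
            rfl
    -- limit of the integrals is ≤ 0
    have hlim : (∫ p, f p ∂μinf) ≤ 0 := by
      refine le_of_tendsto_of_tendsto (hconv f)
        (thermal_far_tendsto μ βstar hβstar hfin (show (0:ℝ) < δ / 2 by positivity)) ?_
      filter_upwards [eventually_gt_atTop βstar] with β hβ using hbnd β hβ
    -- conclude
    have hfi : Integrable (fun p => f p) μinf := f.integrable _
    have hCi : Integrable (C.indicator (fun _ => (1 : ℝ))) μinf :=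
      (integrable_const 1).indicator hC
    have h1 : (μinf C).toReal ≤ ∫ p, f p ∂μinf := by
      calc (μinf C).toReal = ∫ p, C.indicator (fun _ => (1 : ℝ)) p ∂μinf := by
            rw [integral_indicator hC]; simp; rfl
        _ ≤ ∫ p, f p ∂μinf := integral_mono hCi hfi hCf
    have h2 : (μinf C).toReal = 0 := le_antisymm (h1.trans hlim) ENNReal.toReal_nonneg
    have := (ENNReal.toReal_eq_zero_iff _).1 h2
    rcases this with h | h
    · exact h
    · exact absurd h (measure_ne_top μinf C)
  -- the off-diagonal set is a countable union
  have hsub : {p : Zsp N × Zsp N | p.1 ≠ p.2} ⊆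
      ⋃ n : ℕ, {p : Zsp N × Zsp N | 1 / ((n : ℝ) + 1) ≤ ‖p.1 - p.2‖} := by
    intro p hp
    have hpos : 0 < ‖p.1 - p.2‖ := norm_sub_pos_iff.2 hp
    obtain ⟨n, hn⟩ := exists_nat_one_div_lt hpos
    exact Set.mem_iUnion.2 ⟨n, hn.le⟩
  exact measure_mono_null hsub
    (measure_iUnion_null fun n => claim (1 / ((n : ℝ) + 1)) (by positivity))


end
end

section
/- Let μ be a Radon measure on Z × Z satisfying hypotheses (i) μ = L·ℒ^{4N} with L ∈ L¹_loc(Z × Z) non-negative, (ii) L̂(ξ/√2) = lim_{λ→+∞} L(S_λ(ξ,η)) for ℒ^{4N}-a.e. (ξ,η), and (iii) there exist g ∈ L¹(Z × Z), λ₀ > 0, β₀ > 0 with w̄_{β₀}(η)·L(S_λ(ξ,η)) ≤ g(ξ,η) a.e. for all λ ≥ λ₀. Then the total variations of the thermalized measures converge: lim_{β→+∞} |μ_β| = |μ_∞| = ∫_Z L̂(ξ) dξ, where μ_∞ is the diagonal concentration of μ. -/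
open MeasureTheory Filter Topology
open scoped ENNReal

noncomputable section

/-- Change of variables `S_λ(ξ,η) = ((ξ + η/λ)/√2, (ξ − η/λ)/√2)`. -/
def Smap {N : ℕ} (l : ℝ) (p : Zsp N × Zsp N) : Zsp N × Zsp N :=
  ((Real.sqrt 2)⁻¹ • (p.1 + l⁻¹ • p.2), (Real.sqrt 2)⁻¹ • (p.1 - l⁻¹ • p.2))

/-- Inverse change of variables `S_λ⁻¹(y,z) = ((y + z)/√2, λ(y − z)/√2)`. -/
def SmapInv {N : ℕ} (l : ℝ) (p : Zsp N × Zsp N) : Zsp N × Zsp N :=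
  ((Real.sqrt 2)⁻¹ • (p.1 + p.2), (l * (Real.sqrt 2)⁻¹) • (p.1 - p.2))

/-- Weight `w̄_{β₀}(η) = B_{β₀}⁻¹ exp (−2 β₀ ‖η‖²)`. -/
def wbar (N : ℕ) (β₀ : ℝ) (η : Zsp N) : ℝ :=
  (Bconst N β₀)⁻¹ * Real.exp (-(2 * β₀) * ‖η‖ ^ 2)

/-! ### Auxiliary lemmas -/

instance instHaarProdZsp (N : ℕ) :
    Measure.IsAddHaarMeasure (volume : Measure (Zsp N × Zsp N)) := by
  rw [Measure.volume_eq_prod]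
  exact Measure.prod.instIsAddHaarMeasure _ _

/-- The rotation part of `Smap` as a linear map. -/
def Alin (N : ℕ) : (Zsp N × Zsp N) →ₗ[ℝ] (Zsp N × Zsp N) :=
  ((Real.sqrt 2)⁻¹ • (LinearMap.fst ℝ (Zsp N) (Zsp N) + LinearMap.snd ℝ (Zsp N) (Zsp N))).prod
  ((Real.sqrt 2)⁻¹ • (LinearMap.fst ℝ (Zsp N) (Zsp N) - LinearMap.snd ℝ (Zsp N) (Zsp N)))

lemma Alin_comp_Alin (N : ℕ) : (Alin N).comp (Alin N) = LinearMap.id := by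
  have h2 : Real.sqrt 2 * Real.sqrt 2 = 2 := Real.mul_self_sqrt (by norm_num)
  refine LinearMap.ext fun p => Prod.ext ?_ ?_ <;>
    simp [Alin] <;> match_scalars <;> field_simp <;> norm_num [Real.sq_sqrt]

lemma abs_det_Alin (N : ℕ) : |LinearMap.det (Alin N)| = 1 := by
  have h : LinearMap.det (Alin N) * LinearMap.det (Alin N) = 1 := by
    rw [← LinearMap.det_comp, Alin_comp_Alin, LinearMap.det_id]
  rcases mul_self_eq_one_iff.1 h with h | h <;> simp [h]

lemma det_Alin_ne (N : ℕ) : LinearMap.det (Alin N) ≠ 0 := by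
  intro h; simpa [h] using abs_det_Alin N

lemma map_Alin (N : ℕ) : Measure.map (Alin N) (volume : Measure (Zsp N × Zsp N)) = volume := by
  rw [Measure.map_linearMap_addHaar_eq_smul_addHaar _ (det_Alin_ne N)]
  simp [abs_inv, abs_det_Alin N]

lemma Alin_eq (N : ℕ) : ⇑(Alin N) =
    (fun p : Zsp N × Zsp N => ((Real.sqrt 2)⁻¹ • (p.1 + p.2), (Real.sqrt 2)⁻¹ • (p.1 - p.2))) := by
  funext p; simp [Alin]

lemma prod_smul_right' {α β : Type*} [MeasurableSpace α] [MeasurableSpace β]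
    (μ : Measure α) (ν : Measure β) [SigmaFinite μ] [SigmaFinite ν] (c : ℝ≥0∞) (hc : c ≠ ⊤) :
    μ.prod (c • ν) = c • μ.prod ν := by
  ext s hs
  rw [Measure.prod_apply hs, Measure.smul_apply, smul_eq_mul, Measure.prod_apply hs,
    ← lintegral_const_mul' _ _ hc]
  simp

lemma smap_eq_comp {N : ℕ} (l : ℝ) :
    (Smap l : Zsp N × Zsp N → Zsp N × Zsp N)
      = ⇑(Alin N) ∘ (Prod.map (id : Zsp N → Zsp N) (fun η : Zsp N => l⁻¹ • η)) := by
  rw [Alin_eq]; funext p; rfl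

lemma continuous_smap {N : ℕ} (l : ℝ) :
    Continuous (Smap l : Zsp N × Zsp N → Zsp N × Zsp N) := by
  unfold Smap; fun_prop

lemma finrank_zsp (N : ℕ) : Module.finrank ℝ (Zsp N) = 2 * N := by
  simp [finrank_euclideanSpace]

lemma map_smap (N : ℕ) {l : ℝ} (hl : 0 < l) :
    Measure.map (Smap l) (volume : Measure (Zsp N × Zsp N))
      = ENNReal.ofReal (l ^ (2 * N)) • volume := by
  have hD : Measurable (Prod.map (id : Zsp N → Zsp N) (fun η : Zsp N => l⁻¹ • η)) :=
    measurable_id.prodMap (measurable_const_smul _)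
  rw [smap_eq_comp, ← Measure.map_map ((Alin N).continuous_of_finiteDimensional.measurable) hD]
  have hDmap : Measure.map (Prod.map (id : Zsp N → Zsp N) (fun η : Zsp N => l⁻¹ • η))
      (volume : Measure (Zsp N × Zsp N)) = ENNReal.ofReal (l ^ (2 * N)) • volume := by
    rw [Measure.volume_eq_prod,
      ← Measure.map_prod_map _ _ measurable_id (measurable_const_smul l⁻¹),
      Measure.map_id, Measure.map_addHaar_smul volume (inv_ne_zero hl.ne'),
      prod_smul_right' _ _ _ ENNReal.ofReal_ne_top, ← Measure.volume_eq_prod]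
    congr 1
    rw [finrank_zsp, inv_pow, inv_inv, abs_of_nonneg (by positivity)]
  rw [hDmap, Measure.map_smul, map_Alin]

lemma smap_qmp (N : ℕ) {l : ℝ} (hl : 0 < l) :
    Measure.QuasiMeasurePreserving (Smap l : Zsp N × Zsp N → Zsp N × Zsp N) volume volume :=
  ⟨(continuous_smap l).measurable, by
    rw [map_smap N hl]; exact Measure.smul_absolutelyContinuous⟩

lemma lintegral_smap (N : ℕ) {l : ℝ} (hl : 0 < l) {h : Zsp N × Zsp N → ℝ≥0∞}
    (hm : AEMeasurable h (volume : Measure (Zsp N × Zsp N))) :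
    ∫⁻ p, h (Smap l p) = ENNReal.ofReal (l ^ (2 * N)) * ∫⁻ p, h p := by
  have hc0 : ENNReal.ofReal (l ^ (2 * N)) ≠ 0 := by
    simp only [ne_eq, ENNReal.ofReal_eq_zero, not_le]; positivity
  have hsm : AEMeasurable h (Measure.map (Smap l) (volume : Measure (Zsp N × Zsp N))) := by
    rw [map_smap N hl]; exact (aemeasurable_smul_measure_iff hc0).2 hm
  calc ∫⁻ p, h (Smap l p) = ∫⁻ p, h p ∂(Measure.map (Smap l) volume) :=
        (lintegral_map' hsm (continuous_smap l).measurable.aemeasurable).symm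
    _ = ENNReal.ofReal (l ^ (2 * N)) * ∫⁻ p, h p := by
        rw [map_smap N hl, lintegral_smul_measure, smul_eq_mul]

lemma integrable_gauss (N : ℕ) {b : ℝ} (hb : 0 < b) :
    Integrable (fun ξ : Zsp N => Real.exp (-b * ‖ξ‖ ^ 2)) := by
  have h := GaussianFourier.integrable_cexp_neg_mul_sq_norm_add (V := Zsp N)
    (b := (b : ℂ)) (by simpa using hb) 0 0
  have h2 := h.re
  refine h2.congr (Filter.Eventually.of_forall fun ξ => ?_)
  show RCLike.re (Complex.exp _) = _
  rw [show -(b : ℂ) * (‖ξ‖ : ℂ) ^ 2 + 0 * ((inner ℝ (0 : Zsp N) ξ : ℝ) : ℂ)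
      = ((-b * ‖ξ‖ ^ 2 : ℝ) : ℂ) by push_cast; ring]
  exact Complex.exp_ofReal_re _

lemma Bconst_pos_s4 (N : ℕ) {b : ℝ} (hb : 0 < b) : 0 < Bconst N b := by
  rw [Bconst, MeasureTheory.integral_pos_iff_support_of_nonneg
    (fun ξ => (Real.exp_pos _).le) (integrable_gauss N hb)]
  have : (Function.support fun ξ : Zsp N => Real.exp (-b * ‖ξ‖ ^ 2)) = Set.univ := by
    ext ξ; simp [Function.mem_support, (Real.exp_pos _).ne']
  rw [this]
  exact isOpen_univ.measure_pos volume Set.univ_nonempty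

lemma Bconst_scale (N : ℕ) (b : ℝ) {c : ℝ} (hc : 0 < c) :
    Bconst N (b * c ^ 2) = (c ^ (2 * N))⁻¹ * Bconst N b := by
  have h := MeasureTheory.Measure.integral_comp_smul (volume : Measure (Zsp N))
    (fun ξ : Zsp N => Real.exp (-b * ‖ξ‖ ^ 2)) c
  have hnorm : ∀ ξ : Zsp N, Real.exp (-b * ‖c • ξ‖ ^ 2) = Real.exp (-(b * c ^ 2) * ‖ξ‖ ^ 2) := by
    intro ξ
    rw [norm_smul, Real.norm_eq_abs, mul_pow, sq_abs]; ring_nf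
  simp only [hnorm] at h
  rw [Bconst, Bconst, h, finrank_euclideanSpace, Fintype.card_fin, smul_eq_mul,
    abs_of_nonneg (by positivity)]

lemma Bconst_two (N : ℕ) {b : ℝ} : Bconst N (2 * b) = ((2 : ℝ) ^ N)⁻¹ * Bconst N b := by
  have h := Bconst_scale N b (c := Real.sqrt 2) (Real.sqrt_pos.2 (by norm_num))
  rw [Real.sq_sqrt (by norm_num : (0:ℝ) ≤ 2)] at h
  rw [mul_comm b 2] at h
  rw [h, pow_mul, Real.sq_sqrt (by norm_num : (0:ℝ) ≤ 2)]

/-- **Corollary (convergence of total variations, stochastic loading).** -/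
theorem totalVariation_convergence_lebesgue
    {N : ℕ} (hN : 0 < N)
    (L : Zsp N × Zsp N → ℝ) (hL0 : ∀ p, 0 ≤ L p)
    (hLloc : MeasureTheory.LocallyIntegrable L (volume : Measure (Zsp N × Zsp N)))
    (μ : Measure (Zsp N × Zsp N))
    (hμ : μ = volume.withDensity fun p => ENNReal.ofReal (L p))
    (Lhat : Zsp N → ℝ)
    (hcont : ∀ᵐ p : Zsp N × Zsp N ∂volume,
      Filter.Tendsto (fun l : ℝ => L (Smap l p)) Filter.atTop
        (nhds (Lhat ((Real.sqrt 2)⁻¹ • p.1))))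
    (g : Zsp N × Zsp N → ℝ) (hg : MeasureTheory.Integrable g)
    (lam0 β₀ : ℝ) (hlam0 : 0 < lam0) (hβ₀ : 0 < β₀)
    (hdom : ∀ᵐ p : Zsp N × Zsp N ∂volume, ∀ l ≥ lam0, wbar N β₀ p.2 * L (Smap l p) ≤ g p) :
    Filter.Tendsto (fun β : ℝ => ((thermal μ β) Set.univ).toReal) Filter.atTop
      (nhds (∫ ξ : Zsp N, Lhat ξ)) := by
  have hBpos : 0 < Bconst N β₀ := Bconst_pos_s4 N hβ₀
  have hwbar_nonneg : ∀ η : Zsp N, 0 ≤ wbar N β₀ η := fun η =>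
    mul_nonneg (inv_nonneg.2 hBpos.le) (Real.exp_pos _).le
  have hLm : AEStronglyMeasurable L (volume : Measure (Zsp N × Zsp N)) :=
    hLloc.aestronglyMeasurable
  have hwcont : Continuous (fun p : Zsp N × Zsp N => wbar N β₀ p.2) := by
    unfold wbar; fun_prop
  have hFmeas : ∀ {l : ℝ}, 0 < l → AEStronglyMeasurable
      (fun p : Zsp N × Zsp N => wbar N β₀ p.2 * L (Smap l p)) volume := by
    intro l hl
    exact hwcont.aestronglyMeasurable.mul
      (hLm.comp_quasiMeasurePreserving (smap_qmp N hl))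
  have hFnn : ∀ (l : ℝ) (p : Zsp N × Zsp N), 0 ≤ wbar N β₀ p.2 * L (Smap l p) := fun l p =>
    mul_nonneg (hwbar_nonneg _) (hL0 _)
  -- the integral of the limiting function
  have h2N : ((2:ℝ) ^ N) ≠ 0 := by positivity
  have hlim_int : ∫ p : Zsp N × Zsp N, wbar N β₀ p.2 * Lhat ((Real.sqrt 2)⁻¹ • p.1)
      = ∫ ξ : Zsp N, Lhat ξ := by
    have e1 : ∫ p : Zsp N × Zsp N, wbar N β₀ p.2 * Lhat ((Real.sqrt 2)⁻¹ • p.1)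
        = (∫ ξ : Zsp N, Lhat ((Real.sqrt 2)⁻¹ • ξ)) * ∫ η : Zsp N, wbar N β₀ η := by
      rw [Measure.volume_eq_prod, ← MeasureTheory.integral_prod_mul
        (f := fun ξ : Zsp N => Lhat ((Real.sqrt 2)⁻¹ • ξ)) (g := fun η : Zsp N => wbar N β₀ η)]
      congr 1; funext p; ring
    have e2 : ∫ ξ : Zsp N, Lhat ((Real.sqrt 2)⁻¹ • ξ) = (2:ℝ) ^ N * ∫ ξ : Zsp N, Lhat ξ := by
      rw [MeasureTheory.Measure.integral_comp_smul volume Lhat (Real.sqrt 2)⁻¹,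
        finrank_zsp, smul_eq_mul]
      congr 1
      rw [inv_pow, inv_inv, abs_of_nonneg (by positivity), pow_mul,
        Real.sq_sqrt (by norm_num : (0:ℝ) ≤ 2)]
    have e3 : ∫ η : Zsp N, wbar N β₀ η = ((2:ℝ) ^ N)⁻¹ := by
      unfold wbar
      rw [MeasureTheory.integral_const_mul]
      have : (∫ η : Zsp N, Real.exp (-(2 * β₀) * ‖η‖ ^ 2)) = Bconst N (2 * β₀) := rfl
      rw [this, Bconst_two]
      field_simp
    rw [e1, e2, e3]
    field_simp
  -- Step 1 : dominated convergence in the rescaled variable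
  have hI : Tendsto (fun l : ℝ => ∫ p : Zsp N × Zsp N, wbar N β₀ p.2 * L (Smap l p))
      atTop (nhds (∫ ξ : Zsp N, Lhat ξ)) := by
    rw [← hlim_int]
    apply MeasureTheory.tendsto_integral_filter_of_dominated_convergence
      (bound := fun p => ‖g p‖)
    · filter_upwards [eventually_gt_atTop (0:ℝ)] with l hl
      exact hFmeas hl
    · filter_upwards [eventually_ge_atTop lam0] with l hl
      filter_upwards [hdom] with p hp
      rw [Real.norm_eq_abs, abs_of_nonneg (hFnn l p), Real.norm_eq_abs]
      exact (hp l hl).trans (le_abs_self _)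
    · exact hg.norm
    · filter_upwards [hcont] with p hp
      exact hp.const_mul _
  -- the rescaling λ(β) = √(β/β₀)
  have hlamT : Tendsto (fun β : ℝ => Real.sqrt (β / β₀)) atTop atTop := by
    rw [tendsto_atTop]
    intro b
    filter_upwards [eventually_ge_atTop (β₀ * b ^ 2)] with β hβ
    rcases le_or_gt b 0 with hb | hb
    · exact hb.trans (Real.sqrt_nonneg _)
    · rw [Real.le_sqrt' hb, le_div_iff₀ hβ₀]
      nlinarith
  -- Step 2 : eventual identification of |μ_β| with the rescaled integral
  have hev : ∀ᶠ β in atTop, ((thermal μ β) Set.univ).toReal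
      = ∫ p : Zsp N × Zsp N, wbar N β₀ p.2 * L (Smap (Real.sqrt (β / β₀)) p) := by
    filter_upwards [eventually_ge_atTop (β₀ * (lam0 ^ 2 + 1))] with β hβge
    have hβpos : 0 < β := lt_of_lt_of_le (by positivity) hβge
    set l : ℝ := Real.sqrt (β / β₀) with hldef
    have hl2 : l ^ 2 = β / β₀ := Real.sq_sqrt (by positivity)
    have hβeq : β = β₀ * l ^ 2 := by rw [hl2]; field_simp
    have hllam0 : lam0 ≤ l := by
      have h1 : lam0 ^ 2 ≤ l ^ 2 := by
        rw [hl2, le_div_iff₀ hβ₀]; nlinarith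
      have hlnn : 0 ≤ l := Real.sqrt_nonneg _
      nlinarith
    have hlpos : 0 < l := lt_of_lt_of_le hlam0 hllam0
    have hlne : l ≠ 0 := hlpos.ne'
    -- integrability of the rescaled integrand
    have hint : Integrable (fun p : Zsp N × Zsp N => wbar N β₀ p.2 * L (Smap l p)) := by
      refine hg.mono (hFmeas hlpos) ?_
      filter_upwards [hdom] with p hp
      rw [Real.norm_eq_abs, abs_of_nonneg (hFnn l p), Real.norm_eq_abs]
      exact (hp l hllam0).trans (le_abs_self _)
    have h0 : (0:Zsp N × Zsp N → ℝ) ≤ᵐ[volume] fun p => wbar N β₀ p.2 * L (Smap l p) :=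
      Filter.Eventually.of_forall (hFnn l)
    -- Bconst at β
    have hBβ : Bconst N β = (l ^ (2 * N))⁻¹ * Bconst N β₀ := by
      rw [hβeq]; exact Bconst_scale N β₀ hlpos
    have hBβinv : (Bconst N β)⁻¹ = l ^ (2 * N) * (Bconst N β₀)⁻¹ := by
      rw [hBβ, mul_inv, inv_inv]
    -- the kernel
    set K : Zsp N × Zsp N → ℝ≥0∞ :=
      fun p => ENNReal.ofReal (Real.exp (-β * ‖p.1 - p.2‖ ^ 2) * L p) with hK
    have hKm : AEMeasurable K (volume : Measure (Zsp N × Zsp N)) := by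
      have hc : Continuous (fun p : Zsp N × Zsp N => Real.exp (-β * ‖p.1 - p.2‖ ^ 2)) := by
        fun_prop
      exact (hc.aemeasurable.mul hLm.aemeasurable).ennreal_ofReal
    -- pointwise identity relating the thermal density and K
    have hpt1 : ∀ p : Zsp N × Zsp N,
        ENNReal.ofReal (L p)
          * ENNReal.ofReal ((Bconst N β)⁻¹ * Real.exp (-β * ‖p.1 - p.2‖ ^ 2))
        = ENNReal.ofReal ((Bconst N β)⁻¹) * K p := by
      intro p
      rw [ENNReal.ofReal_mul (by rw [hBβinv]; positivity), hK]
      dsimp only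
      rw [ENNReal.ofReal_mul (Real.exp_pos _).le]
      ring
    -- pointwise identity relating the rescaled integrand and K ∘ Smap
    have hpt2 : ∀ p : Zsp N × Zsp N,
        ENNReal.ofReal (wbar N β₀ p.2 * L (Smap l p))
          = ENNReal.ofReal ((Bconst N β₀)⁻¹) * K (Smap l p) := by
      intro p
      have hdiff : (Smap l p).1 - (Smap l p).2
          = ((Real.sqrt 2)⁻¹ * (2 * l⁻¹)) • p.2 := by
        simp only [Smap]; module
      have hcoef : ((Real.sqrt 2)⁻¹ * (2 * l⁻¹)) ^ 2 = 2 * (l ^ 2)⁻¹ := by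
        have h2 : (Real.sqrt 2) ^ 2 = 2 := Real.sq_sqrt (by norm_num)
        field_simp
        exact h2.symm
      have hexp : Real.exp (-β * ‖(Smap l p).1 - (Smap l p).2‖ ^ 2)
          = Real.exp (-(2 * β₀) * ‖p.2‖ ^ 2) := by
        rw [hdiff, norm_smul, Real.norm_eq_abs, mul_pow, sq_abs, hcoef]
        congr 1
        rw [hβeq]
        field_simp
      rw [hK]
      dsimp only
      rw [hexp, wbar, mul_assoc, ENNReal.ofReal_mul (inv_nonneg.2 hBpos.le),
        ENNReal.ofReal_mul (Real.exp_pos _).le]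
    -- the key identity
    have hkey : (thermal μ β) Set.univ
        = ENNReal.ofReal (∫ p : Zsp N × Zsp N, wbar N β₀ p.2 * L (Smap l p)) := by
      rw [MeasureTheory.ofReal_integral_eq_lintegral_ofReal hint h0]
      have hwm : Measurable (fun p : Zsp N × Zsp N =>
          ENNReal.ofReal ((Bconst N β)⁻¹ * Real.exp (-β * ‖p.1 - p.2‖ ^ 2))) := by
        apply ENNReal.measurable_ofReal.comp
        fun_prop
      calc (thermal μ β) Set.univ
          = ∫⁻ p, ENNReal.ofReal (L p)
              * ENNReal.ofReal ((Bconst N β)⁻¹ * Real.exp (-β * ‖p.1 - p.2‖ ^ 2)) ∂volume := by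
            rw [thermal, hμ, withDensity_apply _ MeasurableSet.univ, setLIntegral_univ,
              lintegral_withDensity_eq_lintegral_mul₀ hLm.aemeasurable.ennreal_ofReal
                hwm.aemeasurable]
            rfl
        _ = ENNReal.ofReal ((Bconst N β)⁻¹) * ∫⁻ p, K p ∂volume := by
            simp_rw [hpt1]
            rw [lintegral_const_mul' _ _ ENNReal.ofReal_ne_top]
        _ = ENNReal.ofReal ((Bconst N β₀)⁻¹) * (ENNReal.ofReal (l ^ (2 * N)) * ∫⁻ p, K p) := by
            rw [hBβinv, ENNReal.ofReal_mul (by positivity)]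
            ring
        _ = ENNReal.ofReal ((Bconst N β₀)⁻¹) * ∫⁻ p, K (Smap l p) := by
            rw [lintegral_smap N hlpos hKm]
        _ = ∫⁻ p, ENNReal.ofReal (wbar N β₀ p.2 * L (Smap l p)) ∂volume := by
            rw [← lintegral_const_mul' _ _ ENNReal.ofReal_ne_top]
            exact (lintegral_congr fun p => (hpt2 p).symm)
    rw [hkey, ENNReal.toReal_ofReal (integral_nonneg (hFnn l))]
  exact ((hI.comp hlamT).congr' (hev.mono fun β h => h.symm))
end
end

section
/- Let X = Z × Z with Z = ℝ^{2N} and let μ' be a finite nonzero measure on X. Define, for finite measures ν on X, G(ν) := ∫_X h(dν/dμ') dμ' if ν ≪ μ' and G(ν) := +∞ otherwise, where h(x) = x·log x − x + 1 for x > 0 and h(0) = 1 (values in (−∞,+∞], with the integral interpreted in [0,+∞] since h ≥ 0). Then G is sequentially lower semicontinuous with respect to weak convergence of finite measures: if ν_j converges weakly to ν (i.e. ∫ f dν_j → ∫ f dν for every bounded continuous f), then G(ν) ≤ liminf_{j→∞} G(ν_j). -/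
open MeasureTheory Filter Topology ENNReal

noncomputable section

open Classical

/-- `h(x) = x log x − x + 1` (with `h(0) = 1`, using `Real.log 0 = 0`). -/
def hEnt (x : ℝ) : ℝ := x * Real.log x - x + 1

/-- The Kullback–Leibler functional `G(ν) = ∫ h(dν/dμ') dμ'` if `ν ≪ μ'`, `+∞` otherwise,
with values in `[0,+∞]` (the integrand `h ≥ 0`). -/
def KLfun {X : Type*} [MeasurableSpace X] (μ' ν : Measure X) : ℝ≥0∞ :=
  if ν ≪ μ' then ∫⁻ x, ENNReal.ofReal (hEnt ((ν.rnDeriv μ' x).toReal)) ∂μ' else ⊤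



section AuxLemmas

variable {X : Type*} [MeasurableSpace X]

lemma hEnt_nonneg {x : ℝ} (hx : 0 ≤ x) : 0 ≤ hEnt x := by
  rcases hx.eq_or_lt with h | h
  · subst h; simp [hEnt]
  · have h1 : Real.log x⁻¹ ≤ x⁻¹ - 1 := Real.log_le_sub_one_of_pos (by positivity)
    rw [Real.log_inv] at h1
    have h2 : x * (-Real.log x) ≤ x * (x⁻¹ - 1) := by
      apply mul_le_mul_of_nonneg_left h1 h.le
    have h3 : x * x⁻¹ = 1 := mul_inv_cancel₀ h.ne'
    unfold hEnt; nlinarith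

lemma young {x : ℝ} (hx : 0 ≤ x) (y : ℝ) : x * y - (Real.exp y - 1) ≤ hEnt x := by
  rcases hx.eq_or_lt with h | h
  · have := Real.exp_pos y
    subst h
    simp only [hEnt]
    norm_num
    nlinarith
  · have h1 : (y - Real.log x) + 1 ≤ Real.exp (y - Real.log x) := Real.add_one_le_exp _
    have h2 : Real.exp y = Real.exp (y - Real.log x) * x := by
      have h3 := Real.exp_add (y - Real.log x) (Real.log x)
      rw [Real.exp_log h, sub_add_cancel] at h3
      exact h3
    unfold hEnt; nlinarith

lemma exp_lip {a b n : ℝ} (ha : a ≤ n) (hb : b ≤ n) :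
    |Real.exp a - Real.exp b| ≤ Real.exp n * |a - b| := by
  wlog hab : b ≤ a generalizing a b
  · rw [abs_sub_comm, abs_sub_comm a b]; exact this hb ha (le_of_not_ge hab)
  have h1 : Real.exp a - Real.exp b ≤ Real.exp n * (a - b) := by
    have h2 : 1 + (b - a) ≤ Real.exp (b - a) := by linarith [Real.add_one_le_exp (b - a)]
    have h3 : Real.exp b = Real.exp a * Real.exp (b - a) := by rw [← Real.exp_add]; congr 1; ring
    have h4 : Real.exp a ≤ Real.exp n := Real.exp_le_exp.mpr ha
    nlinarith [Real.exp_pos a]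
  have h5 : 0 ≤ Real.exp a - Real.exp b := by
    have := Real.exp_le_exp.mpr hab; linarith
  rw [abs_of_nonneg h5, abs_of_nonneg (by linarith : (0:ℝ) ≤ a - b)]
  exact h1

lemma clamp_close {a b n : ℝ} (h1 : -n ≤ b) (h2 : b ≤ n) :
    |max (-n) (min n a) - b| ≤ |a - b| := by
  rcases le_total a (-n) with ha | ha
  · have hm : min n a ≤ -n := le_trans (min_le_right _ _) ha
    rw [max_eq_left hm]
    rw [abs_of_nonpos (by linarith), abs_of_nonpos (by linarith)]
    linarith
  · rcases le_total n a with hb | hb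
    · have hm : -n ≤ min n a := le_min (by linarith) (by linarith)
      rw [max_eq_right hm, min_eq_left hb]
      rw [abs_of_nonneg (by linarith), abs_of_nonneg (by linarith)]
      linarith
    · have hm : -n ≤ min n a := le_min (by linarith) ha
      rw [max_eq_right hm, min_eq_right hb]

lemma integrable_of_bdd {μ : Measure X} [IsFiniteMeasure μ] {f : X → ℝ}
    (hf : AEStronglyMeasurable f μ) {C : ℝ} (hC : ∀ x, |f x| ≤ C) : Integrable f μ :=
  Integrable.mono' (integrable_const C) hf
    (ae_of_all _ fun x => by simpa [Real.norm_eq_abs] using hC x)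

lemma ofReal_integral_le {μ : Measure X} {f : X → ℝ} (hf : Integrable f μ) :
    ENNReal.ofReal (∫ x, f x ∂μ) ≤ ∫⁻ x, ENNReal.ofReal (f x) ∂μ := by
  calc ENNReal.ofReal (∫ x, f x ∂μ)
      ≤ ENNReal.ofReal (∫ x, max (f x) 0 ∂μ) := by
        apply ENNReal.ofReal_le_ofReal
        exact integral_mono hf hf.pos_part (fun x => le_max_left _ _)
    _ = ∫⁻ x, ENNReal.ofReal (max (f x) 0) ∂μ := by
        rw [ofReal_integral_eq_lintegral_ofReal hf.pos_part
          (ae_of_all _ fun x => le_max_right _ _)]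
    _ = ∫⁻ x, ENNReal.ofReal (f x) ∂μ := by
        congr 1; funext x
        rcases le_total (f x) 0 with h | h
        · rw [max_eq_right h, ENNReal.ofReal_of_nonpos h, ENNReal.ofReal_zero]
        · rw [max_eq_left h]

/-- Easy direction: the dual functional is below the KL functional. -/
lemma dual_le_KLfun (μ ρ : Measure X) [IsFiniteMeasure μ] [IsFiniteMeasure ρ]
    {f : X → ℝ} (hf : Measurable f) {C : ℝ} (hC : ∀ x, |f x| ≤ C) :
    ENNReal.ofReal ((∫ x, f x ∂ρ) - ∫ x, (Real.exp (f x) - 1) ∂μ) ≤ KLfun μ ρ := by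
  rw [KLfun]
  split_ifs with hac
  · set g : X → ℝ := fun x => (ρ.rnDeriv μ x).toReal with hg
    have hgmeas : Measurable g := (Measure.measurable_rnDeriv ρ μ).ennreal_toReal
    have hgint : Integrable g μ := Measure.integrable_toReal_rnDeriv
    have hfg : Integrable (fun x => f x * g x) μ :=
      hgint.bdd_mul hf.aestronglyMeasurable (ae_of_all _ fun x => by simpa [Real.norm_eq_abs] using hC x)
    have hexp : Integrable (fun x => Real.exp (f x) - 1) μ := by
      apply integrable_of_bdd ((Real.continuous_exp.measurable.comp hf).sub
        measurable_const).aestronglyMeasurable (C := Real.exp C + 1)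
      intro x
      simp only [Pi.sub_apply, Function.comp_apply]
      have h1 : Real.exp (f x) ≤ Real.exp C := Real.exp_le_exp.mpr (le_of_abs_le (hC x))
      have h2 := Real.exp_pos (f x)
      rw [abs_le]; constructor <;> linarith
    have h1 : ∫ x, f x ∂ρ = ∫ x, f x * g x ∂μ := by
      rw [← MeasureTheory.integral_rnDeriv_smul hac (f := f)]
      simp [hg, smul_eq_mul, mul_comm]
    rw [h1, ← integral_sub hfg hexp]
    calc ENNReal.ofReal (∫ x, (f x * g x - (Real.exp (f x) - 1)) ∂μ)
        ≤ ∫⁻ x, ENNReal.ofReal (f x * g x - (Real.exp (f x) - 1)) ∂μ :=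
          ofReal_integral_le (hfg.sub hexp)
      _ ≤ ∫⁻ x, ENNReal.ofReal (hEnt (g x)) ∂μ := by
          apply lintegral_mono fun x => ENNReal.ofReal_le_ofReal ?_
          rw [mul_comm]
          exact young ENNReal.toReal_nonneg (f x)
  · exact le_top


variable [MetricSpace X] [BorelSpace X]

/-- A bounded measurable test function can be replaced by a bounded continuous one with
almost the same value of the dual functional. -/
lemma exists_bcf_dual_ge (μ ν : Measure X) [IsFiniteMeasure μ] [IsFiniteMeasure ν]
    {f₀ : X → ℝ} (hmeas : Measurable f₀) {n : ℝ} (hn : 0 ≤ n) (hbd : ∀ x, |f₀ x| ≤ n)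
    {ε : ℝ} (hε : 0 < ε) :
    ∃ f : BoundedContinuousFunction X ℝ,
      ((∫ x, f₀ x ∂ν) - ∫ x, (Real.exp (f₀ x) - 1) ∂μ) - ε
        ≤ (∫ x, f x ∂ν) - ∫ x, (Real.exp (f x) - 1) ∂μ := by
  set σ : Measure X := μ + ν with hσ
  have : IsFiniteMeasure σ := by rw [hσ]; infer_instance
  have hint : Integrable f₀ σ := integrable_of_bdd hmeas.aestronglyMeasurable hbd
  set δ : ℝ := ε / (1 + Real.exp n) with hδ
  have hδpos : 0 < δ := by positivity
  obtain ⟨u, hu, -⟩ := hint.exists_boundedContinuous_integral_sub_le hδpos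
  -- clamp u to [-n, n]
  set f : BoundedContinuousFunction X ℝ :=
    BoundedContinuousFunction.ofNormedAddCommGroup
      (fun x => max (-n) (min n (u x)))
      (continuous_const.max (continuous_const.min u.continuous)) n
      (fun x => by
        rw [Real.norm_eq_abs, abs_le]
        constructor
        · exact le_max_left _ _
        · exact max_le (by linarith) (min_le_left _ _)) with hf
  refine ⟨f, ?_⟩
  have hfx : ∀ x, f x = max (-n) (min n (u x)) := fun x => rfl
  have hfbd : ∀ x, |f x| ≤ n := fun x => by
    rw [hfx, abs_le]
    exact ⟨le_max_left _ _, max_le (by linarith) (min_le_left _ _)⟩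
  have hclose : ∀ x, |f x - f₀ x| ≤ |u x - f₀ x| := fun x => by
    rw [hfx]
    exact clamp_close (neg_le_of_abs_le (hbd x)) (le_of_abs_le (hbd x))
  -- integrability facts
  have hf0ν : Integrable f₀ ν := integrable_of_bdd hmeas.aestronglyMeasurable hbd
  have hfν : Integrable f ν := integrable_of_bdd f.continuous.aestronglyMeasurable hfbd
  have hfμ : Integrable f μ := integrable_of_bdd f.continuous.aestronglyMeasurable hfbd
  have hexpbd : ∀ (v : X → ℝ), (∀ x, |v x| ≤ n) → ∀ x, |Real.exp (v x) - 1| ≤ Real.exp n + 1 := by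
    intro v hv x
    have h1 : Real.exp (v x) ≤ Real.exp n := Real.exp_le_exp.mpr (le_of_abs_le (hv x))
    have h2 := Real.exp_pos (v x)
    rw [abs_le]; constructor <;> linarith
  have hexpf : Integrable (fun x => Real.exp (f x) - 1) μ :=
    integrable_of_bdd ((Real.continuous_exp.comp f.continuous).sub
      continuous_const).aestronglyMeasurable (hexpbd _ hfbd)
  have hexpf0 : Integrable (fun x => Real.exp (f₀ x) - 1) μ :=
    integrable_of_bdd ((Real.continuous_exp.measurable.comp hmeas).sub
      measurable_const).aestronglyMeasurable (hexpbd _ hbd)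
  -- integrability of |f₀ - u| w.r.t. μ and ν
  have huσ : Integrable (fun x => u x) σ :=
    integrable_of_bdd u.continuous.aestronglyMeasurable (C := ‖u‖)
      (fun x => by simpa [Real.norm_eq_abs] using u.norm_coe_le_norm x)
  have habsσ : Integrable (fun x => |f₀ x - u x|) σ := (hint.sub huσ).abs
  have habsμ : Integrable (fun x => |f₀ x - u x|) μ := by
    rw [hσ, integrable_add_measure] at habsσ; exact habsσ.1
  have habsν : Integrable (fun x => |f₀ x - u x|) ν := by
    rw [hσ, integrable_add_measure] at habsσ; exact habsσ.2
  have hnn : ∀ (ρ : Measure X), (0:ℝ) ≤ ∫ x, |f₀ x - u x| ∂ρ :=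
    fun ρ => integral_nonneg (fun x => abs_nonneg _)
  have hsum : ∫ x, |f₀ x - u x| ∂μ + ∫ x, |f₀ x - u x| ∂ν ≤ δ := by
    rw [← integral_add_measure habsμ habsν]
    simpa [hσ, Real.norm_eq_abs] using hu
  -- step 1 : ν-part
  have h1 : (∫ x, f₀ x ∂ν) - (∫ x, f x ∂ν) ≤ ∫ x, |f₀ x - u x| ∂ν := by
    rw [← integral_sub hf0ν hfν]
    apply integral_mono (hf0ν.sub hfν) habsν
    intro x
    have := hclose x
    have h2 : |f₀ x - f x| ≤ |f₀ x - u x| := by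
      rw [abs_sub_comm (f₀ x), abs_sub_comm (f₀ x)]
      exact this
    exact (le_abs_self _).trans h2
  -- step 2 : μ-part
  have h2 : (∫ x, (Real.exp (f x) - 1) ∂μ) - (∫ x, (Real.exp (f₀ x) - 1) ∂μ)
      ≤ Real.exp n * ∫ x, |f₀ x - u x| ∂μ := by
    rw [← integral_sub hexpf hexpf0, ← integral_const_mul]
    apply integral_mono (hexpf.sub hexpf0) (habsμ.const_mul _)
    intro x
    have hlip : |Real.exp (f x) - Real.exp (f₀ x)| ≤ Real.exp n * |f x - f₀ x| :=
      exp_lip (le_of_abs_le (hfbd x)) (le_of_abs_le (hbd x))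
    have h3 : |f x - f₀ x| ≤ |f₀ x - u x| := by
      rw [abs_sub_comm (f₀ x)]; exact hclose x
    have h4 : Real.exp n * |f x - f₀ x| ≤ Real.exp n * |f₀ x - u x| :=
      mul_le_mul_of_nonneg_left h3 (Real.exp_pos n).le
    calc Real.exp (f x) - 1 - (Real.exp (f₀ x) - 1)
        = Real.exp (f x) - Real.exp (f₀ x) := by ring
      _ ≤ |Real.exp (f x) - Real.exp (f₀ x)| := le_abs_self _
      _ ≤ Real.exp n * |f₀ x - u x| := hlip.trans h4
  have hfinal : (1 + Real.exp n) * (∫ x, |f₀ x - u x| ∂μ + ∫ x, |f₀ x - u x| ∂ν) ≤ ε := by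
    have := mul_le_mul_of_nonneg_left hsum (by positivity : (0:ℝ) ≤ 1 + Real.exp n)
    rw [hδ] at this
    calc (1 + Real.exp n) * (∫ x, |f₀ x - u x| ∂μ + ∫ x, |f₀ x - u x| ∂ν)
        ≤ (1 + Real.exp n) * (ε / (1 + Real.exp n)) := this
      _ = ε := by field_simp
  have hem := Real.exp_pos n
  nlinarith [hnn μ, hnn ν]

lemma iSup_dual_eq_top_of_not_ac (μ ν : Measure X) [IsFiniteMeasure μ] [IsFiniteMeasure ν]
    (hac : ¬ ν ≪ μ) :
    (⨆ f : BoundedContinuousFunction X ℝ,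
      ENNReal.ofReal ((∫ x, f x ∂ν) - ∫ x, (Real.exp (f x) - 1) ∂μ)) = ⊤ := by
  set S := ⨆ f : BoundedContinuousFunction X ℝ,
      ENNReal.ofReal ((∫ x, f x ∂ν) - ∫ x, (Real.exp (f x) - 1) ∂μ) with hS
  -- a bad set
  have hex : ∃ s, μ s = 0 ∧ ν s ≠ 0 := by
    by_contra h
    push_neg at h
    exact hac (Measure.AbsolutelyContinuous.mk fun s _ h0 => h s h0)
  obtain ⟨s, hs0, hsne⟩ := hex
  set t := toMeasurable μ s with ht
  have htm : MeasurableSet t := measurableSet_toMeasurable μ s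
  have htμ : μ t = 0 := by rw [ht, measure_toMeasurable]; exact hs0
  have htν : ν t ≠ 0 := fun h => hsne (measure_mono_null (subset_toMeasurable μ s) h)
  set c : ℝ := (ν t).toReal / 2 with hc
  have hcpos : 0 < c := by
    have h1 : 0 < (ν t).toReal := ENNReal.toReal_pos htν (measure_ne_top ν t)
    positivity
  have key : ∀ n : ℕ, ∃ f : BoundedContinuousFunction X ℝ,
      (n:ℝ) * c - 1 ≤ (∫ x, f x ∂ν) - ∫ x, (Real.exp (f x) - 1) ∂μ := by
    intro n
    obtain ⟨U, htU, hUopen, hUμ⟩ := Set.exists_isOpen_lt_add t (measure_ne_top μ t)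
        (show ENNReal.ofReal (Real.exp (-(n:ℝ))) ≠ 0 by
          simp [ENNReal.ofReal_eq_zero, not_le, Real.exp_pos])
    rw [htμ, zero_add] at hUμ
    obtain ⟨K, hKt, hKclosed, hKν⟩ := htm.exists_isClosed_lt_add (μ := ν) (measure_ne_top ν t)
        (show ν t / 2 ≠ 0 by simp [ENNReal.div_eq_zero_iff, htν])
    have hKν2 : ν t / 2 < ν K := by
      have h2 : ν t / 2 + ν t / 2 < ν K + ν t / 2 := by rwa [ENNReal.add_halves]
      exact lt_of_add_lt_add_right h2
    have hdisj : Disjoint Uᶜ K := Set.disjoint_left.mpr fun x hxU hxK => hxU (htU (hKt hxK))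
    obtain ⟨f₀, hf₀U, hf₀K, hf₀01⟩ :=
      exists_continuous_zero_one_of_isClosed hUopen.isClosed_compl hKclosed hdisj
    have hfnn : ∀ x, 0 ≤ (n:ℝ) * f₀ x := fun x => mul_nonneg (Nat.cast_nonneg n) (hf₀01 x).1
    have hfub : ∀ x, (n:ℝ) * f₀ x ≤ n := fun x => by
      nlinarith [(hf₀01 x).2, (Nat.cast_nonneg n : (0:ℝ) ≤ n)]
    set f : BoundedContinuousFunction X ℝ :=
      BoundedContinuousFunction.ofNormedAddCommGroup (fun x => (n:ℝ) * f₀ x)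
        (continuous_const.mul f₀.continuous) n
        (fun x => by rw [Real.norm_eq_abs, abs_of_nonneg (hfnn x)]; exact hfub x) with hf
    have hfx : ∀ x, f x = (n:ℝ) * f₀ x := fun x => rfl
    have hfbd : ∀ x, |f x| ≤ n := fun x => by
      rw [hfx, abs_of_nonneg (hfnn x)]; exact hfub x
    have hfint : Integrable f ν := integrable_of_bdd f.continuous.aestronglyMeasurable hfbd
    have hexpf : Integrable (fun x => Real.exp (f x) - 1) μ := by
      apply integrable_of_bdd ((Real.continuous_exp.comp f.continuous).sub
        continuous_const).aestronglyMeasurable (C := Real.exp n + 1)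
      intro x
      simp only [Pi.sub_apply, Function.comp_apply]
      have h1 : Real.exp (f x) ≤ Real.exp n := Real.exp_le_exp.mpr (le_of_abs_le (hfbd x))
      have h2 := Real.exp_pos (f x)
      rw [abs_le]; constructor <;> linarith
    refine ⟨f, ?_⟩
    have hK : MeasurableSet K := hKclosed.measurableSet
    -- lower bound for the ν-integral
    have hlow : (n:ℝ) * (ν K).toReal ≤ ∫ x, f x ∂ν := by
      have h1 : ∫ x in K, f x ∂ν = (ν K).toReal * n := by
        rw [setIntegral_congr_fun hK (g := fun _ => (n:ℝ))
          (fun x hx => by rw [hfx, hf₀K hx]; simp), setIntegral_const, smul_eq_mul, measureReal_def]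
      have h2 : ∫ x in K, f x ∂ν ≤ ∫ x, f x ∂ν :=
        setIntegral_le_integral hfint (ae_of_all _ fun x => by rw [hfx]; exact hfnn x)
      rw [mul_comm]; rw [h1] at h2; exact h2
    -- upper bound for the μ-integral
    have hup : ∫ x, (Real.exp (f x) - 1) ∂μ ≤ 1 := by
      have hUmeas : MeasurableSet U := hUopen.measurableSet
      have hpt : ∀ x, Real.exp (f x) - 1 ≤ Set.indicator U (fun _ => Real.exp n - 1) x := by
        intro x
        by_cases hx : x ∈ U
        · rw [Set.indicator_of_mem hx]
          have h3 : Real.exp (f x) ≤ Real.exp n := Real.exp_le_exp.mpr (le_of_abs_le (hfbd x))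
          linarith
        · rw [Set.indicator_of_notMem hx]
          have h4 : f₀ x = 0 := hf₀U hx
          rw [hfx, h4]
          simp
      have hind : Integrable (Set.indicator U (fun _ => Real.exp n - 1)) μ :=
        (integrable_const _).indicator hUmeas
      have h3 := integral_mono hexpf hind hpt
      rw [integral_indicator hUmeas, setIntegral_const, smul_eq_mul, measureReal_def] at h3
      have hUr : (μ U).toReal ≤ Real.exp (-(n:ℝ)) := by
        have h5 : μ U ≤ ENNReal.ofReal (Real.exp (-(n:ℝ))) := hUμ.le
        calc (μ U).toReal ≤ (ENNReal.ofReal (Real.exp (-(n:ℝ)))).toReal :=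
              ENNReal.toReal_mono (by simp) h5
          _ = Real.exp (-(n:ℝ)) := ENNReal.toReal_ofReal (Real.exp_pos _).le
      have h6 : Real.exp (-(n:ℝ)) * Real.exp (n:ℝ) = 1 := by
        rw [← Real.exp_add]; simp
      have h7 : (0:ℝ) ≤ Real.exp (n:ℝ) - 1 := by
        have := Real.one_le_exp (Nat.cast_nonneg n : (0:ℝ) ≤ n); linarith
      calc ∫ x, (Real.exp (f x) - 1) ∂μ ≤ (μ U).toReal * (Real.exp n - 1) := h3
        _ ≤ Real.exp (-(n:ℝ)) * (Real.exp n - 1) := by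
            apply mul_le_mul_of_nonneg_right hUr h7
        _ ≤ 1 := by nlinarith [Real.exp_pos (-(n:ℝ))]
    -- combine
    have hKr : c ≤ (ν K).toReal := by
      rw [hc]
      have h8 : (ν t / 2).toReal ≤ (ν K).toReal :=
        ENNReal.toReal_mono (measure_ne_top ν K) hKν2.le
      rwa [ENNReal.toReal_div, ENNReal.toReal_ofNat] at h8
    have h9 : (n:ℝ) * c ≤ (n:ℝ) * (ν K).toReal :=
      mul_le_mul_of_nonneg_left hKr (Nat.cast_nonneg n)
    linarith
  -- conclude S = ⊤
  by_contra hStop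
  have hSlt : ∀ n : ℕ, (n:ℝ) * c - 1 ≤ S.toReal := by
    intro n
    obtain ⟨f, hfle⟩ := key n
    have h1 : ENNReal.ofReal ((n:ℝ) * c - 1) ≤ S :=
      le_trans (ENNReal.ofReal_le_ofReal hfle) (le_iSup_of_le f le_rfl)
    exact (ENNReal.ofReal_le_iff_le_toReal hStop).mp h1
  set n := ⌈(S.toReal + 2) / c⌉₊ with hn
  have h2 : (S.toReal + 2) / c ≤ (n:ℝ) := Nat.le_ceil _
  have h3 : S.toReal + 2 ≤ (n:ℝ) * c := (div_le_iff₀ hcpos).mp h2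
  have := hSlt n
  linarith

-- pointwise nonnegativity of the truncated integrand
lemma phi_nonneg {t : ℝ} (ht : 0 ≤ t) (n : ℕ) :
    0 ≤ min (n:ℝ) (Real.log (max t (Real.exp (-(n:ℝ))))) * t -
      (Real.exp (min (n:ℝ) (Real.log (max t (Real.exp (-(n:ℝ)))))) - 1) := by
  set s : ℝ := max t (Real.exp (-(n:ℝ))) with hs
  have hspos : 0 < s := lt_max_of_lt_right (Real.exp_pos _)
  have hts : t ≤ s := le_max_left _ _
  rcases le_or_gt (Real.log s) (n:ℝ) with hcase | hcase
  · rw [min_eq_right hcase, Real.exp_log hspos]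
    rcases le_or_gt (Real.exp (-(n:ℝ))) t with h1 | h1
    · have hst : s = t := max_eq_left h1
      rw [hst]
      have := hEnt_nonneg ht
      unfold hEnt at this
      nlinarith
    · have hst : s = Real.exp (-(n:ℝ)) := max_eq_right h1.le
      have hlogs : Real.log s = -(n:ℝ) := by rw [hst, Real.log_exp]
      have hlneg : Real.log s ≤ 0 := by rw [hlogs]; simp
      have h2 : s * Real.log s ≤ t * Real.log s := by
        apply mul_le_mul_of_nonpos_right hts hlneg
      have := hEnt_nonneg hspos.le
      unfold hEnt at this
      nlinarith
  · rw [min_eq_left hcase.le]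
    have hsgt : Real.exp (n:ℝ) < s := by
      calc Real.exp (n:ℝ) < Real.exp (Real.log s) := Real.exp_lt_exp.mpr hcase
        _ = s := Real.exp_log hspos
    have hst : s = t := by
      rcases max_cases t (Real.exp (-(n:ℝ))) with ⟨h1, -⟩ | ⟨h1, -⟩
      · exact h1
      · exfalso
        have h2 : Real.exp (-(n:ℝ)) ≤ Real.exp (n:ℝ) :=
          Real.exp_le_exp.mpr (neg_le_self (show (0:ℝ) ≤ (n:ℝ) by positivity))
        rw [hs, h1] at hsgt
        linarith
    have htgt : Real.exp (n:ℝ) < t := hst ▸ hsgt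
    have h3 : Real.exp (-(n:ℝ)) * Real.exp (n:ℝ) = 1 := by rw [← Real.exp_add]; simp
    have h4 : -(n:ℝ) + 1 ≤ Real.exp (-(n:ℝ)) := Real.add_one_le_exp _
    have h5 : (n:ℝ) * Real.exp (n:ℝ) ≤ (n:ℝ) * t :=
      mul_le_mul_of_nonneg_left htgt.le (Nat.cast_nonneg n)
    nlinarith [Real.exp_pos (n:ℝ), Real.exp_pos (-(n:ℝ))]

-- pointwise convergence
lemma phi_tendsto {t : ℝ} (ht : 0 ≤ t) :
    Tendsto (fun n : ℕ => min (n:ℝ) (Real.log (max t (Real.exp (-(n:ℝ))))) * t -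
      (Real.exp (min (n:ℝ) (Real.log (max t (Real.exp (-(n:ℝ)))))) - 1))
      atTop (nhds (hEnt t)) := by
  rcases ht.eq_or_lt with h | h
  · subst h
    have heq : ∀ n : ℕ, min (n:ℝ) (Real.log (max 0 (Real.exp (-(n:ℝ))))) = -(n:ℝ) := by
      intro n
      rw [max_eq_right (Real.exp_pos _).le, Real.log_exp,
        min_eq_right (neg_le_self (show (0:ℝ) ≤ (n:ℝ) by positivity))]
    have hEnt0 : hEnt 0 = 1 := by simp [hEnt]
    rw [hEnt0]
    have : (fun n : ℕ => min (n:ℝ) (Real.log (max 0 (Real.exp (-(n:ℝ))))) * 0 -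
        (Real.exp (min (n:ℝ) (Real.log (max 0 (Real.exp (-(n:ℝ)))))) - 1))
        = fun n : ℕ => 1 - Real.exp (-(n:ℝ)) := by
      funext n; rw [heq n]; ring
    rw [this]
    have h2 : Tendsto (fun n : ℕ => Real.exp (-(n:ℝ))) atTop (nhds 0) := by
      apply Real.tendsto_exp_atBot.comp
      exact tendsto_neg_atBot_iff.mpr tendsto_natCast_atTop_atTop
    simpa using tendsto_const_nhds.sub h2
  · apply Tendsto.congr' ?_ (tendsto_const_nhds (x := hEnt t))
    rw [Filter.EventuallyEq, eventually_atTop]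
    refine ⟨⌈|Real.log t|⌉₊, fun n hn => ?_⟩
    have h1 : |Real.log t| ≤ (n:ℝ) := le_trans (Nat.le_ceil _) (Nat.cast_le.mpr hn)
    have h2 : -(n:ℝ) ≤ Real.log t := neg_le_of_abs_le h1
    have h3 : Real.log t ≤ (n:ℝ) := le_of_abs_le h1
    have h4 : Real.exp (-(n:ℝ)) ≤ t := by
      calc Real.exp (-(n:ℝ)) ≤ Real.exp (Real.log t) := Real.exp_le_exp.mpr h2
        _ = t := Real.exp_log h
    rw [max_eq_left h4, min_eq_right h3, Real.exp_log h]
    unfold hEnt; ring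

/-- Hard direction, absolutely continuous case. -/
lemma KLfun_le_iSup_dual_ac (μ ν : Measure X) [IsFiniteMeasure μ] [IsFiniteMeasure ν]
    (hac : ν ≪ μ) :
    (∫⁻ x, ENNReal.ofReal (hEnt ((ν.rnDeriv μ x).toReal)) ∂μ)
      ≤ ⨆ f : BoundedContinuousFunction X ℝ,
          ENNReal.ofReal ((∫ x, f x ∂ν) - ∫ x, (Real.exp (f x) - 1) ∂μ) := by
  set S := ⨆ f : BoundedContinuousFunction X ℝ,
      ENNReal.ofReal ((∫ x, f x ∂ν) - ∫ x, (Real.exp (f x) - 1) ∂μ) with hS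
  set g : X → ℝ := fun x => (ν.rnDeriv μ x).toReal with hg
  have hgmeas : Measurable g := (Measure.measurable_rnDeriv ν μ).ennreal_toReal
  have hgint : Integrable g μ := Measure.integrable_toReal_rnDeriv
  have hgnn : ∀ x, 0 ≤ g x := fun x => ENNReal.toReal_nonneg
  set fs : ℕ → X → ℝ := fun n x => min (n:ℝ) (Real.log (max (g x) (Real.exp (-(n:ℝ))))) with hfs
  have hfsmeas : ∀ n, Measurable (fs n) := fun n =>
    measurable_const.min (Real.measurable_log.comp (hgmeas.max measurable_const))
  have hfsbd : ∀ n x, |fs n x| ≤ n := by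
    intro n x
    rw [abs_le]
    constructor
    · apply le_min (neg_le_self (show (0:ℝ) ≤ (n:ℝ) by positivity))
      calc -(n:ℝ) = Real.log (Real.exp (-(n:ℝ))) := (Real.log_exp _).symm
        _ ≤ Real.log (max (g x) (Real.exp (-(n:ℝ)))) := by
            apply Real.log_le_log (Real.exp_pos _) (le_max_right _ _)
    · exact min_le_left _ _
  set φ : ℕ → X → ℝ := fun n x => fs n x * g x - (Real.exp (fs n x) - 1) with hφ
  have hφmeas : ∀ n, Measurable (φ n) := fun n =>
    ((hfsmeas n).mul hgmeas).sub ((Real.measurable_exp.comp (hfsmeas n)).sub measurable_const)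
  have hφnn : ∀ n x, 0 ≤ φ n x := fun n x => phi_nonneg (hgnn x) n
  have hφint : ∀ n, Integrable (φ n) μ := by
    intro n
    apply Integrable.sub
    · exact hgint.bdd_mul (hfsmeas n).aestronglyMeasurable
        (ae_of_all _ fun x => by simpa [Real.norm_eq_abs] using hfsbd n x)
    · apply integrable_of_bdd ((Real.measurable_exp.comp (hfsmeas n)).sub
        measurable_const).aestronglyMeasurable (C := Real.exp n + 1)
      intro x
      simp only [Pi.sub_apply, Function.comp_apply]
      have h1 : Real.exp (fs n x) ≤ Real.exp n := Real.exp_le_exp.mpr (le_of_abs_le (hfsbd n x))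
      have h2 := Real.exp_pos (fs n x)
      rw [abs_le]; constructor <;> linarith
  -- Fatou
  have hfatou : (∫⁻ x, ENNReal.ofReal (hEnt (g x)) ∂μ)
      ≤ liminf (fun n => ∫⁻ x, ENNReal.ofReal (φ n x) ∂μ) atTop := by
    have hliminf : ∀ x, ENNReal.ofReal (hEnt (g x))
        = liminf (fun n => ENNReal.ofReal (φ n x)) atTop := by
      intro x
      have h1 : Tendsto (fun n => ENNReal.ofReal (φ n x)) atTop
          (nhds (ENNReal.ofReal (hEnt (g x)))) :=
        (ENNReal.continuous_ofReal.tendsto _).comp (phi_tendsto (hgnn x))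
      exact h1.liminf_eq.symm
    calc (∫⁻ x, ENNReal.ofReal (hEnt (g x)) ∂μ)
        = ∫⁻ x, liminf (fun n => ENNReal.ofReal (φ n x)) atTop ∂μ := by
          congr 1; funext x; exact hliminf x
      _ ≤ liminf (fun n => ∫⁻ x, ENNReal.ofReal (φ n x) ∂μ) atTop :=
          lintegral_liminf_le (fun n => ENNReal.measurable_ofReal.comp (hφmeas n))
  refine hfatou.trans ?_
  -- each term is at most S
  have hterm : ∀ n, (∫⁻ x, ENNReal.ofReal (φ n x) ∂μ) ≤ S := by
    intro n
    rw [← ofReal_integral_eq_lintegral_ofReal (hφint n) (ae_of_all _ (hφnn n))]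
    -- identify with the dual functional at fs n
    have hfsν : ∫ x, fs n x ∂ν = ∫ x, fs n x * g x ∂μ := by
      rw [← MeasureTheory.integral_rnDeriv_smul hac (f := fs n)]
      simp [hg, smul_eq_mul, mul_comm]
    have hexpint : Integrable (fun x => Real.exp (fs n x) - 1) μ := by
      apply integrable_of_bdd ((Real.measurable_exp.comp (hfsmeas n)).sub
        measurable_const).aestronglyMeasurable (C := Real.exp n + 1)
      intro x
      simp only [Pi.sub_apply, Function.comp_apply]
      have h1 : Real.exp (fs n x) ≤ Real.exp n := Real.exp_le_exp.mpr (le_of_abs_le (hfsbd n x))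
      have h2 := Real.exp_pos (fs n x)
      rw [abs_le]; constructor <;> linarith
    have hmul : Integrable (fun x => fs n x * g x) μ :=
      hgint.bdd_mul (hfsmeas n).aestronglyMeasurable
        (ae_of_all _ fun x => by simpa [Real.norm_eq_abs] using hfsbd n x)
    have hD : ∫ x, φ n x ∂μ = (∫ x, fs n x ∂ν) - ∫ x, (Real.exp (fs n x) - 1) ∂μ := by
      rw [hfsν, ← integral_sub hmul hexpint]
    rw [hD]
    -- approximate by a bounded continuous function
    apply ENNReal.le_of_forall_pos_le_add
    intro ε hε hStop
    obtain ⟨f, hf⟩ := exists_bcf_dual_ge μ ν (hfsmeas n) (Nat.cast_nonneg n) (hfsbd n)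
      (show (0:ℝ) < ε by exact_mod_cast hε)
    calc ENNReal.ofReal ((∫ x, fs n x ∂ν) - ∫ x, (Real.exp (fs n x) - 1) ∂μ)
        ≤ ENNReal.ofReal (((∫ x, f x ∂ν) - ∫ x, (Real.exp (f x) - 1) ∂μ) + ε) := by
          apply ENNReal.ofReal_le_ofReal; linarith
      _ ≤ ENNReal.ofReal ((∫ x, f x ∂ν) - ∫ x, (Real.exp (f x) - 1) ∂μ) + ENNReal.ofReal ε :=
          ENNReal.ofReal_add_le
      _ ≤ S + ε := by
          apply add_le_add (le_iSup_of_le f le_rfl)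
          rw [ENNReal.ofReal_coe_nnreal]
  calc liminf (fun n => ∫⁻ x, ENNReal.ofReal (φ n x) ∂μ) atTop
      ≤ liminf (fun _ : ℕ => S) atTop := liminf_le_liminf (Eventually.of_forall hterm)
    _ = S := liminf_const S

end AuxLemmas

/-- **Proposition (weak lower semicontinuity of the KL divergence).**
On `X = Z × Z` with `Z = ℝ^{2N}`, if finite measures `ν_j` converge weakly to `ν`
(against bounded continuous functions) then `G(ν) ≤ liminf_j G(ν_j)`. -/
theorem KL_weakly_lsc
    {N : ℕ} (hN : 0 < N)
    (μ' : Measure (Zsp N × Zsp N)) [IsFiniteMeasure μ'] (hμ' : μ' ≠ 0)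
    (ν : Measure (Zsp N × Zsp N)) [IsFiniteMeasure ν]
    (νs : ℕ → Measure (Zsp N × Zsp N)) (hνs : ∀ j, IsFiniteMeasure (νs j))
    (hconv : ∀ f : BoundedContinuousFunction (Zsp N × Zsp N) ℝ,
      Filter.Tendsto (fun j => ∫ x, f x ∂(νs j)) Filter.atTop (nhds (∫ x, f x ∂ν))) :
    KLfun μ' ν ≤ Filter.liminf (fun j => KLfun μ' (νs j)) Filter.atTop := by
  set S := ⨆ f : BoundedContinuousFunction (Zsp N × Zsp N) ℝ,
      ENNReal.ofReal ((∫ x, f x ∂ν) - ∫ x, (Real.exp (f x) - 1) ∂μ') with hSdef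
  have h1 : KLfun μ' ν ≤ S := by
    by_cases hac : ν ≪ μ'
    · rw [KLfun, if_pos hac]
      exact KLfun_le_iSup_dual_ac μ' ν hac
    · rw [KLfun, if_neg hac, hSdef, iSup_dual_eq_top_of_not_ac μ' ν hac]
  refine h1.trans (iSup_le fun f => ?_)
  have h2 : ∀ j, ENNReal.ofReal ((∫ x, f x ∂(νs j)) - ∫ x, (Real.exp (f x) - 1) ∂μ')
      ≤ KLfun μ' (νs j) := by
    intro j
    haveI := hνs j
    exact dual_le_KLfun μ' (νs j) f.continuous.measurable (C := ‖f‖)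
      (fun x => by simpa [Real.norm_eq_abs] using f.norm_coe_le_norm x)
  have h3 : Tendsto (fun j => ENNReal.ofReal ((∫ x, f x ∂(νs j)) -
        ∫ x, (Real.exp (f x) - 1) ∂μ')) atTop
      (nhds (ENNReal.ofReal ((∫ x, f x ∂ν) - ∫ x, (Real.exp (f x) - 1) ∂μ'))) :=
    (ENNReal.continuous_ofReal.tendsto _).comp ((hconv f).sub tendsto_const_nhds)
  calc ENNReal.ofReal ((∫ x, f x ∂ν) - ∫ x, (Real.exp (f x) - 1) ∂μ')
      = liminf (fun j => ENNReal.ofReal ((∫ x, f x ∂(νs j)) -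
          ∫ x, (Real.exp (f x) - 1) ∂μ')) atTop := h3.liminf_eq.symm
    _ ≤ liminf (fun j => KLfun μ' (νs j)) atTop :=
        liminf_le_liminf (Eventually.of_forall h2)
end
end

section
/- Let p : ℝ^{2N} → ℤ^{2N} be the componentwise nearest-integer projection p_i(y) := ⌊y_i + 1/2⌋, let δ_h > 0 with δ_h → 0, and define T_h : Z × Z → Z × Z by T_h(y,z) = (δ_h·p(y/δ_h), δ_h·p(z/δ_h)). Let λ_h → +∞ and write (ξ'_h(ξ,η), η'_h(ξ,η)) := S_{λ_h}^{−1} ∘ T_h ∘ S_{λ_h}(ξ,η). Then: (a) for every (ξ,η) ∈ Z × Z, T_h ∘ S_{λ_h}(ξ,η) → (ξ/√2, ξ/√2) as h → ∞; and (b) if in addition λ_h·δ_h → 0, then for every (ξ,η) ∈ Z × Z, η'_h(ξ,η) → η as h → ∞, where explicitly η'_h(ξ,η) = (λ_h δ_h/√2)·[p(δ_h^{−1}(ξ + η/λ_h)/√2) − p(δ_h^{−1}(ξ − η/λ_h)/√2)]. -/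
open MeasureTheory Filter Topology

noncomputable section

/-- Componentwise nearest-integer projection `p_i(y) = ⌊y_i + 1/2⌋` of `ℝ^{2N}` onto
`ℤ^{2N}`, viewed as a map of `Z` to itself. -/
def nproj {N : ℕ} (y : Zsp N) : Zsp N := WithLp.toLp 2 (fun i => ((⌊y i + 1 / 2⌋ : ℤ) : ℝ))

/-- Projection `T_h(y,z) = (δ p(y/δ), δ p(z/δ))` onto the uniform grid `δ ℤ^{4N}`. -/
def Tgrid {N : ℕ} (δ : ℝ) (p : Zsp N × Zsp N) : Zsp N × Zsp N :=
  (δ • nproj (δ⁻¹ • p.1), δ • nproj (δ⁻¹ • p.2))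

lemma nproj_err {N : ℕ} {δ : ℝ} (hδ : 0 < δ) (x : Zsp N) :
    ‖δ • nproj (δ⁻¹ • x) - x‖ ≤ Real.sqrt (2*N) * δ / 2 := by
  have hb : ∀ i, ‖(δ • nproj (δ⁻¹ • x) - x) i‖ ≤ δ/2 := by
    intro i
    have h1 : (δ • nproj (δ⁻¹ • x) - x) i = δ * ((⌊δ⁻¹ * x i + 1/2⌋ : ℤ) - δ⁻¹ * x i) := by
      simp [nproj, PiLp.smul_apply, PiLp.sub_apply]
      field_simp
    rw [h1, Real.norm_eq_abs, abs_mul, abs_of_pos hδ]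
    have hle : ((⌊δ⁻¹ * x i + 1/2⌋ : ℤ) : ℝ) ≤ δ⁻¹ * x i + 1/2 := Int.floor_le _
    have hlt : δ⁻¹ * x i + 1/2 < (⌊δ⁻¹ * x i + 1/2⌋ : ℤ) + 1 := Int.lt_floor_add_one _
    have : |((⌊δ⁻¹ * x i + 1/2⌋ : ℤ) : ℝ) - δ⁻¹ * x i| ≤ 1/2 := by
      rw [abs_le]; constructor <;> linarith
    nlinarith
  rw [EuclideanSpace.norm_eq]
  have hs : ∑ i, ‖(δ • nproj (δ⁻¹ • x) - x) i‖ ^ 2 ≤ (2*N) * (δ/2)^2 := by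
    calc ∑ i, ‖(δ • nproj (δ⁻¹ • x) - x) i‖ ^ 2 ≤ ∑ _i : Fin (2*N), (δ/2)^2 :=
        Finset.sum_le_sum fun i _ => by
          have := hb i; nlinarith [norm_nonneg ((δ • nproj (δ⁻¹ • x) - x) i)]
      _ = (2*N) * (δ/2)^2 := by simp [Finset.sum_const]
  calc Real.sqrt (∑ i, ‖(δ • nproj (δ⁻¹ • x) - x) i‖ ^ 2)
      ≤ Real.sqrt ((2*N) * (δ/2)^2) := Real.sqrt_le_sqrt hs
    _ = Real.sqrt (2*N) * (δ/2) := by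
        rw [Real.sqrt_mul (by positivity), Real.sqrt_sq (by positivity)]
    _ = Real.sqrt (2*N) * δ / 2 := by ring

lemma grid_tendsto {N : ℕ} (δ : ℕ → ℝ) (hδpos : ∀ h, 0 < δ h)
    (hδ : Tendsto δ atTop (nhds 0)) (y : ℕ → Zsp N) (a : Zsp N)
    (hy : Tendsto y atTop (nhds a)) :
    Tendsto (fun h => (δ h) • nproj ((δ h)⁻¹ • y h)) atTop (nhds a) := by
  rw [tendsto_iff_norm_sub_tendsto_zero]
  apply squeeze_zero (fun h => norm_nonneg _)
    (g := fun h => Real.sqrt (2*N) * δ h / 2 + ‖y h - a‖)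
  · intro h
    calc ‖(δ h) • nproj ((δ h)⁻¹ • y h) - a‖
        ≤ ‖(δ h) • nproj ((δ h)⁻¹ • y h) - y h‖ + ‖y h - a‖ := norm_sub_le_norm_sub_add_norm_sub _ _ _
      _ ≤ Real.sqrt (2*N) * δ h / 2 + ‖y h - a‖ := by
          gcongr; exact nproj_err (hδpos h) _
  · have h1 : Tendsto (fun h => Real.sqrt (2*N) * δ h / 2) atTop (nhds 0) := by
      have := (hδ.const_mul (Real.sqrt (2*N))).div_const 2
      simpa using this
    have h2 : Tendsto (fun h => ‖y h - a‖) atTop (nhds 0) :=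
      (tendsto_iff_norm_sub_tendsto_zero.mp hy)
    simpa using h1.add h2

/-- **Example (uniform grid).**
Let `T_h` be the projection onto the grid `δ_h ℤ^{4N}` with `δ_h → 0`, and `λ_h → +∞`.
Then (a) `T_h ∘ S_{λ_h}(ξ,η) → (ξ/√2, ξ/√2)`, and (b) if moreover `λ_h δ_h → 0`, then
`η'_h(ξ,η) → η`, where `(ξ'_h,η'_h) = S_{λ_h}⁻¹ ∘ T_h ∘ S_{λ_h}(ξ,η)`. -/
theorem uniform_grid_example
    {N : ℕ} (hN : 0 < N)
    (δ : ℕ → ℝ) (hδpos : ∀ h, 0 < δ h)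
    (hδ : Filter.Tendsto δ Filter.atTop (nhds 0))
    (lam : ℕ → ℝ) (hlam : Filter.Tendsto lam Filter.atTop Filter.atTop) :
    (∀ p : Zsp N × Zsp N,
      Filter.Tendsto (fun h : ℕ => Tgrid (δ h) (Smap (lam h) p)) Filter.atTop
        (nhds ((Real.sqrt 2)⁻¹ • p.1, (Real.sqrt 2)⁻¹ • p.1))) ∧
    (Filter.Tendsto (fun h : ℕ => lam h * δ h) Filter.atTop (nhds 0) →
      ∀ p : Zsp N × Zsp N,
        Filter.Tendsto
          (fun h : ℕ => (SmapInv (lam h) (Tgrid (δ h) (Smap (lam h) p))).2)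
          Filter.atTop (nhds p.2)) := by
  have hs2 : Real.sqrt 2 * Real.sqrt 2 = 2 := Real.mul_self_sqrt (by norm_num)
  have hs2ne : Real.sqrt 2 ≠ 0 := by positivity
  have hlinv : Tendsto (fun h => (lam h)⁻¹) atTop (nhds 0) := hlam.inv_tendsto_atTop
  constructor
  · intro p
    have hA : Tendsto (fun h => (lam h)⁻¹ • p.2) atTop (nhds 0) := by
      simpa using hlinv.smul_const p.2
    have h1 : Tendsto (fun h => (Smap (lam h) p).1) atTop
        (nhds ((Real.sqrt 2)⁻¹ • p.1)) := by
      have := ((tendsto_const_nhds (x := p.1)).add hA).const_smul ((Real.sqrt 2)⁻¹)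
      simpa [Smap] using this
    have h2 : Tendsto (fun h => (Smap (lam h) p).2) atTop
        (nhds ((Real.sqrt 2)⁻¹ • p.1)) := by
      have := ((tendsto_const_nhds (x := p.1)).sub hA).const_smul ((Real.sqrt 2)⁻¹)
      simpa [Smap] using this
    simp only [Tgrid]
    exact (grid_tendsto δ hδpos hδ _ _ h1).prodMk_nhds (grid_tendsto δ hδpos hδ _ _ h2)
  · intro hld p
    rw [tendsto_iff_norm_sub_tendsto_zero]
    have hev : ∀ᶠ h in atTop, 0 < lam h := hlam.eventually_gt_atTop 0
    apply squeeze_zero' (Eventually.of_forall fun h => norm_nonneg _)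
      (g := fun h => Real.sqrt (2*N) * (lam h * δ h))
    · filter_upwards [hev] with h hl
      set ξ := p.1; set η := p.2
      set s1 : Zsp N := (Real.sqrt 2)⁻¹ • (ξ + (lam h)⁻¹ • η) with hs1
      set s2 : Zsp N := (Real.sqrt 2)⁻¹ • (ξ - (lam h)⁻¹ • η) with hs2d
      set g1 : Zsp N := (δ h) • nproj ((δ h)⁻¹ • s1) with hg1
      set g2 : Zsp N := (δ h) • nproj ((δ h)⁻¹ • s2) with hg2
      have hval : (SmapInv (lam h) (Tgrid (δ h) (Smap (lam h) p))).2
          = (lam h * (Real.sqrt 2)⁻¹) • (g1 - g2) := rfl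
      have hkey : (lam h * (Real.sqrt 2)⁻¹) • (s1 - s2) = η := by
        have hd : s1 - s2 = ((Real.sqrt 2)⁻¹ * (2 * (lam h)⁻¹)) • η := by
          rw [hs1, hs2d]; module
        rw [hd, smul_smul]
        have : lam h * (Real.sqrt 2)⁻¹ * ((Real.sqrt 2)⁻¹ * (2 * (lam h)⁻¹)) = 1 := by
          field_simp
          rw [Real.sq_sqrt (by norm_num : (0:ℝ) ≤ 2)]
        rw [this, one_smul]
      have hdecomp : (SmapInv (lam h) (Tgrid (δ h) (Smap (lam h) p))).2 - η
          = (lam h * (Real.sqrt 2)⁻¹) • ((g1 - s1) - (g2 - s2)) := by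
        rw [hval, ← hkey]; module
      rw [hdecomp, norm_smul]
      have he1 : ‖g1 - s1‖ ≤ Real.sqrt (2*N) * δ h / 2 := nproj_err (hδpos h) _
      have he2 : ‖g2 - s2‖ ≤ Real.sqrt (2*N) * δ h / 2 := nproj_err (hδpos h) _
      have hnorm : ‖(g1 - s1) - (g2 - s2)‖ ≤ Real.sqrt (2*N) * δ h := by
        calc ‖(g1 - s1) - (g2 - s2)‖ ≤ ‖g1 - s1‖ + ‖g2 - s2‖ := norm_sub_le _ _
          _ ≤ Real.sqrt (2*N) * δ h := by linarith
      have hscal : ‖lam h * (Real.sqrt 2)⁻¹‖ ≤ lam h := by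
        have h1s : (1:ℝ) ≤ Real.sqrt 2 := by nlinarith [Real.sqrt_nonneg 2]
        rw [Real.norm_eq_abs, abs_mul, abs_of_pos hl, abs_of_pos (by positivity)]
        exact mul_le_of_le_one_right hl.le (inv_le_one_of_one_le₀ h1s)
      calc ‖lam h * (Real.sqrt 2)⁻¹‖ * ‖(g1 - s1) - (g2 - s2)‖
          ≤ lam h * (Real.sqrt (2*N) * δ h) := by
            apply mul_le_mul hscal hnorm (norm_nonneg _) (le_of_lt hl)
        _ = Real.sqrt (2*N) * (lam h * δ h) := by ring
    · simpa using hld.const_mul (Real.sqrt (2*N))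
end
end

section
/- Let m = n + l with n, l ≥ 1, let C = diag(C₁,…,C_m) with C_e > 0, let B ∈ ℝ^{m×n} have rank n, let A ∈ ℝ^{m×l} have columns forming a basis of Ker(B^T), and assume ℝ^m is the direct sum of A·ℝ^l and C·B·ℝ^n. Fix ε₀, σ₀ ∈ ℝ^m and define q(u,v) := A·v + σ₀ − C·(B·u + ε₀) ∈ ℝ^m for (u,v) ∈ ℝ^n × ℝ^l. Then ∫_{ℝ^n × ℝ^l} exp(−(1/2)·⟨C^{−1} q(u,v), q(u,v)⟩) du dv = det(B^T C B / 2π)^{−1/2} · det(A^T C^{−1} A / 2π)^{−1/2}. -/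
open Matrix MeasureTheory

noncomputable section

/-- The residual `q(u,v) = A v + σ₀ − C (B u + ε₀)` of a random truss. -/
def trussResidual {m n l : ℕ}
    (C : Matrix (Fin m) (Fin m) ℝ) (B : Matrix (Fin m) (Fin n) ℝ)
    (A : Matrix (Fin m) (Fin l) ℝ) (ε₀ σ₀ : Fin m → ℝ)
    (uv : (Fin n → ℝ) × (Fin l → ℝ)) : Fin m → ℝ :=
  A.mulVec uv.2 + σ₀ - C.mulVec (B.mulVec uv.1 + ε₀)

private lemma dp_mulVec {m k : ℕ} (A : Matrix (Fin m) (Fin k) ℝ) (x : Fin k → ℝ) (y : Fin m → ℝ) :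
    (A *ᵥ x) ⬝ᵥ y = x ⬝ᵥ (Aᵀ *ᵥ y) := by
  rw [dotProduct_comm (A *ᵥ x) y, Matrix.dotProduct_mulVec, ← Matrix.mulVec_transpose,
    dotProduct_comm]

private lemma gaussian_integral_posDef {k : ℕ} (M : Matrix (Fin k) (Fin k) ℝ) (hM : M.PosDef) :
    ∫ x : Fin k → ℝ, Real.exp (-(1/2) * (x ⬝ᵥ M *ᵥ x)) =
    (Real.sqrt (((2 * Real.pi)⁻¹ • M).det))⁻¹ := by
  obtain ⟨S, hSmul, hSsym⟩ : ∃ S : Matrix (Fin k) (Fin k) ℝ, S * S = M ∧ Sᵀ = S := by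
    open scoped MatrixOrder in
    exact ⟨CFC.sqrt M, CFC.sqrt_mul_sqrt_self M hM.posSemidef.nonneg, by
      have := (CFC.sqrt_nonneg M).posSemidef.1
      simpa [Matrix.IsHermitian] using this⟩
  have hdet2 : S.det * S.det = M.det := by rw [← Matrix.det_mul, hSmul]
  have hMdet : 0 < M.det := hM.det_pos
  have hSdet : S.det ≠ 0 := by
    intro h; rw [h, mul_zero] at hdet2; exact hMdet.ne hdet2
  have habs : |S.det| = Real.sqrt M.det := by
    rw [← hdet2, ← sq, Real.sqrt_sq_eq_abs]
  have hquad : ∀ x : Fin k → ℝ, x ⬝ᵥ M *ᵥ x = (S *ᵥ x) ⬝ᵥ (S *ᵥ x) := by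
    intro x
    rw [← hSmul, ← Matrix.mulVec_mulVec, Matrix.dotProduct_mulVec, ← Matrix.mulVec_transpose,
      hSsym]
  simp_rw [hquad]
  have hmap : Measure.map (Matrix.toLin' S) volume
      = ENNReal.ofReal |S.det|⁻¹ • volume := by
    rw [← abs_inv]; exact Real.map_matrix_volume_pi_eq_smul_volume_pi hSdet
  have hcont : Continuous fun y : Fin k → ℝ => Real.exp (-(1/2) * (y ⬝ᵥ y)) := by
    have : (fun y : Fin k → ℝ => Real.exp (-(1/2) * (y ⬝ᵥ y)))
        = fun y : Fin k → ℝ => Real.exp (-(1/2) * ∑ i, y i * y i) := rfl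
    rw [this]; fun_prop
  have h1 : ∫ x : Fin k → ℝ, Real.exp (-(1/2) * ((S *ᵥ x) ⬝ᵥ (S *ᵥ x)))
      = |S.det|⁻¹ * ∫ y : Fin k → ℝ, Real.exp (-(1/2) * (y ⬝ᵥ y)) := by
    have := MeasureTheory.integral_map (f := fun y : Fin k → ℝ => Real.exp (-(1/2) * (y ⬝ᵥ y)))
      (μ := (volume : Measure (Fin k → ℝ)))
      (φ := Matrix.toLin' S) (Matrix.toLin' S).continuous_of_finiteDimensional.aemeasurable
      hcont.aestronglyMeasurable
    rw [hmap, MeasureTheory.integral_smul_measure] at this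
    simp only [Matrix.toLin'_apply] at this
    rw [← this]
    rw [ENNReal.toReal_ofReal (by positivity : (0:ℝ) ≤ |S.det|⁻¹), smul_eq_mul]
  rw [h1]
  have h2 : ∫ y : Fin k → ℝ, Real.exp (-(1/2) * (y ⬝ᵥ y)) = (Real.sqrt (2 * Real.pi)) ^ k := by
    have he : ∀ y : Fin k → ℝ, Real.exp (-(1/2) * (y ⬝ᵥ y))
        = ∏ i, Real.exp (-(1/2) * (y i)^2) := by
      intro y
      rw [← Real.exp_sum, dotProduct, Finset.mul_sum]
      congr 1
      exact Finset.sum_congr rfl fun i _ => by ring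
    simp_rw [he]
    rw [MeasureTheory.integral_fintype_prod_volume_eq_pow (ι := Fin k) (fun t : ℝ => Real.exp (-(1/2) * t^2))]
    have hg := integral_gaussian (1/2 : ℝ)
    simp_rw [neg_mul] at hg ⊢
    rw [hg, Fintype.card_fin, show Real.pi / (1/2 : ℝ) = 2 * Real.pi by ring]
  rw [h2, habs]
  have e1 : (Real.sqrt (2*Real.pi))^2 = 2*Real.pi := Real.sq_sqrt (by positivity)
  have e2 : (Real.sqrt M.det)^2 = M.det := Real.sq_sqrt hMdet.le
  have h3 : ((2 * Real.pi)⁻¹ • M).det = (((Real.sqrt (2*Real.pi))⁻¹)^k * Real.sqrt M.det)^2 := by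
    have hr : (((Real.sqrt (2*Real.pi))⁻¹)^k * Real.sqrt M.det)^2
        = ((Real.sqrt (2*Real.pi))^2)⁻¹ ^ k * (Real.sqrt M.det)^2 := by ring
    rw [Matrix.det_smul, Fintype.card_fin, hr, e1, e2]
  rw [h3, Real.sqrt_sq (by positivity), mul_inv, inv_pow, inv_inv]
  ring

private lemma posDef_conj {m k : ℕ} (M : Matrix (Fin m) (Fin m) ℝ) (hM : M.PosDef)
    (N : Matrix (Fin m) (Fin k) ℝ) (hN : Function.Injective N.mulVecLin) :
    (Nᵀ * M * N).PosDef := by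
  have hsym : Mᵀ = M := hM.1
  rw [Matrix.posDef_iff_dotProduct_mulVec]
  constructor
  · show (Nᵀ * M * N)ᴴ = _
    have : (Nᵀ * M * N)ᴴ = (Nᵀ * M * N)ᵀ := rfl
    rw [this, Matrix.transpose_mul, Matrix.transpose_mul, Matrix.transpose_transpose, hsym,
      Matrix.mul_assoc]
  · intro x hx
    have hNx : N *ᵥ x ≠ 0 := by
      intro h
      apply hx
      apply hN
      simpa [Matrix.mulVecLin_apply] using h
    have := hM.dotProduct_mulVec_pos hNx
    simp only [star_trivial] at this ⊢
    calc x ⬝ᵥ (Nᵀ * M * N) *ᵥ x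
        = x ⬝ᵥ (Nᵀ *ᵥ ((M * N) *ᵥ x)) := by rw [Matrix.mul_assoc, ← Matrix.mulVec_mulVec]
      _ = (N *ᵥ x) ⬝ᵥ ((M * N) *ᵥ x) := (dp_mulVec N x _).symm
      _ = (N *ᵥ x) ⬝ᵥ (M *ᵥ (N *ᵥ x)) := by rw [Matrix.mulVec_mulVec]
      _ > 0 := this

private lemma quad_split {m n l : ℕ} (D Dinv : Matrix (Fin m) (Fin m) ℝ)
    (hDinvsym : Dinvᵀ = Dinv)
    (h1 : Dinv * D = 1)
    (B : Matrix (Fin m) (Fin n) ℝ) (A : Matrix (Fin m) (Fin l) ℝ)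
    (hAB : Aᵀ * B = 0) (z : Fin n → ℝ) (w : Fin l → ℝ) :
    (Dinv *ᵥ (A *ᵥ w - D *ᵥ (B *ᵥ z))) ⬝ᵥ (A *ᵥ w - D *ᵥ (B *ᵥ z))
      = z ⬝ᵥ (Bᵀ * D * B) *ᵥ z + w ⬝ᵥ (Aᵀ * Dinv * A) *ᵥ w := by
  set a := A *ᵥ w with ha
  set b := B *ᵥ z with hb
  have hDb : Dinv *ᵥ (D *ᵥ b) = b := by
    rw [Matrix.mulVec_mulVec, h1, Matrix.one_mulVec]
  have hcross : a ⬝ᵥ b = 0 := by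
    rw [ha, hb, dp_mulVec, Matrix.mulVec_mulVec, hAB, Matrix.zero_mulVec, dotProduct_zero]
  have hcross' : b ⬝ᵥ a = 0 := by rw [dotProduct_comm]; exact hcross
  have hf1 : (Dinv *ᵥ a) ⬝ᵥ (D *ᵥ b) = 0 := by
    have : (Dinv *ᵥ a) ⬝ᵥ (D *ᵥ b) = a ⬝ᵥ (Dinv *ᵥ (D *ᵥ b)) := by
      rw [dotProduct_comm (Dinv *ᵥ a), Matrix.dotProduct_mulVec (D *ᵥ b) Dinv a]
      rw [← Matrix.mulVec_transpose, hDinvsym, dotProduct_comm]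
    rw [this, hDb, hcross]
  have hq1 : z ⬝ᵥ (Bᵀ * D * B) *ᵥ z = b ⬝ᵥ (D *ᵥ b) := by
    rw [Matrix.mul_assoc, ← Matrix.mulVec_mulVec, ← Matrix.mulVec_mulVec, ← dp_mulVec B z, ← hb]
  have hq2 : w ⬝ᵥ (Aᵀ * Dinv * A) *ᵥ w = (Dinv *ᵥ a) ⬝ᵥ a := by
    rw [Matrix.mul_assoc, ← Matrix.mulVec_mulVec, ← Matrix.mulVec_mulVec, ← dp_mulVec A w, ← ha,
      dotProduct_comm]
  rw [hq1, hq2, Matrix.mulVec_sub, hDb, sub_dotProduct, dotProduct_sub, dotProduct_sub,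
    hf1, hcross']
  ring


/-- **Example (random trusses: Gaussian normalization).**
Let `m = n + l`, `C = diag(C₁,…,C_m)` with `C_e > 0`, let `B ∈ ℝ^{m×n}` have rank `n`, let
the columns of `A ∈ ℝ^{m×l}` form a basis of `Ker Bᵀ`, and assume `ℝ^m = A ℝ^l ⊕ C B ℝ^n`.
Then, with `q(u,v) = A v + σ₀ − C(B u + ε₀)`,
`∫ exp(−½⟨C⁻¹q,q⟩) du dv = det(BᵀCB/2π)^{−1/2} det(AᵀC⁻¹A/2π)^{−1/2}`. -/
theorem random_truss_gaussian_integral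
    (n l : ℕ) (hn : 1 ≤ n) (hl : 1 ≤ l)
    (c : Fin (n + l) → ℝ) (hc : ∀ e, 0 < c e)
    (B : Matrix (Fin (n + l)) (Fin n) ℝ) (A : Matrix (Fin (n + l)) (Fin l) ℝ)
    (hB : B.rank = n)
    (hAinj : Function.Injective A.mulVecLin)
    (hArange : LinearMap.range A.mulVecLin = LinearMap.ker (Bᵀ).mulVecLin)
    (hcompl : IsCompl (LinearMap.range A.mulVecLin)
      (LinearMap.range ((Matrix.diagonal c * B)).mulVecLin))
    (ε₀ σ₀ : Fin (n + l) → ℝ) :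
    ∫ uv : (Fin n → ℝ) × (Fin l → ℝ),
        Real.exp (-(1 / 2) *
          ((Matrix.diagonal c)⁻¹.mulVec (trussResidual (Matrix.diagonal c) B A ε₀ σ₀ uv) ⬝ᵥ
            trussResidual (Matrix.diagonal c) B A ε₀ σ₀ uv)) =
      (Real.sqrt (((2 * Real.pi)⁻¹ • (Bᵀ * Matrix.diagonal c * B)).det))⁻¹ *
        (Real.sqrt (((2 * Real.pi)⁻¹ • (Aᵀ * (Matrix.diagonal c)⁻¹ * A)).det))⁻¹ := by
  set D := Matrix.diagonal c with hD
  have hDinv : D⁻¹ = Matrix.diagonal (fun i => (c i)⁻¹) := by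
    refine Matrix.inv_eq_right_inv ?_
    rw [hD, Matrix.diagonal_mul_diagonal]
    rw [show (fun i => c i * (c i)⁻¹) = fun _ => (1:ℝ) from funext fun i =>
      mul_inv_cancel₀ (hc i).ne', Matrix.diagonal_one]
  have hDinvsym : (D⁻¹)ᵀ = D⁻¹ := by rw [hDinv, Matrix.diagonal_transpose]
  have hDinvD : D⁻¹ * D = 1 := by
    rw [hDinv, hD, Matrix.diagonal_mul_diagonal]
    rw [show (fun i => (c i)⁻¹ * c i) = fun _ => (1:ℝ) from funext fun i =>
      inv_mul_cancel₀ (hc i).ne', Matrix.diagonal_one]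
  -- injectivity of B
  have hBinj : Function.Injective B.mulVecLin := by
    rw [← LinearMap.ker_eq_bot]
    have hrn := LinearMap.finrank_range_add_finrank_ker B.mulVecLin
    rw [show Module.finrank ℝ (LinearMap.range B.mulVecLin) = n from hB] at hrn
    simp only [Module.finrank_pi, Fintype.card_fin] at hrn
    have : Module.finrank ℝ (LinearMap.ker B.mulVecLin) = 0 := by omega
    exact Submodule.finrank_eq_zero.mp this
  -- A transpose * B = 0
  have hBA : Bᵀ * A = 0 := by
    have h0 : ∀ v, (Bᵀ * A) *ᵥ v = 0 := by
      intro v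
      have : A.mulVecLin v ∈ LinearMap.ker (Bᵀ).mulVecLin := by
        rw [← hArange]; exact LinearMap.mem_range_self _ v
      have h' : Bᵀ *ᵥ (A *ᵥ v) = 0 := by
        have h'' := LinearMap.mem_ker.mp this
        simp only [Matrix.mulVecLin_apply] at h''
        exact h''
      rw [← Matrix.mulVec_mulVec]
      exact h'
    ext i j
    have h1 := congrFun (h0 (Pi.single j 1)) i
    rw [Matrix.mulVec_single] at h1
    simpa using h1
  have hAB : Aᵀ * B = 0 := by
    have : (Bᵀ * A)ᵀ = Aᵀ * B := by
      rw [Matrix.transpose_mul, Matrix.transpose_transpose]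
    rw [← this, hBA, Matrix.transpose_zero]
  -- decomposition of σ₀ - D ε₀
  have htop : LinearMap.range A.mulVecLin ⊔ LinearMap.range (D * B).mulVecLin = ⊤ :=
    codisjoint_iff.mp hcompl.codisjoint
  have hmem : σ₀ - D *ᵥ ε₀ ∈
      LinearMap.range A.mulVecLin ⊔ LinearMap.range (D * B).mulVecLin := by
    rw [htop]; trivial
  obtain ⟨y, hy, zz, hz, hsum⟩ := Submodule.mem_sup.mp hmem
  obtain ⟨v₀, rfl⟩ := hy
  obtain ⟨u₀, rfl⟩ := hz
  simp only [Matrix.mulVecLin_apply] at hsum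
  -- pointwise form of the residual
  have hres : ∀ uv : (Fin n → ℝ) × (Fin l → ℝ),
      trussResidual D B A ε₀ σ₀ uv
        = A *ᵥ (uv.2 + v₀) - D *ᵥ (B *ᵥ (uv.1 - u₀)) := by
    intro uv
    rw [← Matrix.mulVec_mulVec] at hsum
    have hσ : σ₀ = A *ᵥ v₀ + D *ᵥ (B *ᵥ u₀) + D *ᵥ ε₀ := by
      have h2 := sub_eq_iff_eq_add.mp hsum.symm
      rw [h2]
    rw [trussResidual, hσ]
    rw [Matrix.mulVec_add, Matrix.mulVec_add, Matrix.mulVec_sub, Matrix.mulVec_sub]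
    abel
  -- the two quadratic matrices
  have hDpos : D.PosDef := by
    rw [hD]; exact Matrix.posDef_diagonal_iff.mpr hc
  have hDinvpos : D⁻¹.PosDef := by
    rw [hDinv]; exact Matrix.posDef_diagonal_iff.mpr fun i => inv_pos.mpr (hc i)
  have hM1 : (Bᵀ * D * B).PosDef := posDef_conj D hDpos B hBinj
  have hM2 : (Aᵀ * D⁻¹ * A).PosDef := posDef_conj D⁻¹ hDinvpos A hAinj
  -- rewrite the integrand
  have hpt : ∀ uv : (Fin n → ℝ) × (Fin l → ℝ),
      Real.exp (-(1 / 2) *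
          (D⁻¹.mulVec (trussResidual D B A ε₀ σ₀ uv) ⬝ᵥ trussResidual D B A ε₀ σ₀ uv))
        = Real.exp (-(1/2) * ((uv.1 - u₀) ⬝ᵥ (Bᵀ * D * B) *ᵥ (uv.1 - u₀)))
          * Real.exp (-(1/2) * ((uv.2 + v₀) ⬝ᵥ (Aᵀ * D⁻¹ * A) *ᵥ (uv.2 + v₀))) := by
    intro uv
    rw [← Real.exp_add]
    congr 1
    rw [hres uv,
      quad_split D D⁻¹ hDinvsym hDinvD B A hAB (uv.1 - u₀) (uv.2 + v₀)]
    ring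
  simp_rw [hpt]
  rw [MeasureTheory.Measure.volume_eq_prod, MeasureTheory.integral_prod_mul
    (f := fun u : Fin n → ℝ => Real.exp (-(1/2) * ((u - u₀) ⬝ᵥ (Bᵀ * D * B) *ᵥ (u - u₀))))
    (g := fun v : Fin l → ℝ => Real.exp (-(1/2) * ((v + v₀) ⬝ᵥ (Aᵀ * D⁻¹ * A) *ᵥ (v + v₀))))]
  have hι1 : ∫ u : Fin n → ℝ,
      Real.exp (-(1/2) * ((u - u₀) ⬝ᵥ (Bᵀ * D * B) *ᵥ (u - u₀)))
      = (Real.sqrt (((2 * Real.pi)⁻¹ • (Bᵀ * D * B)).det))⁻¹ := by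
    rw [MeasureTheory.integral_sub_right_eq_self
      (fun u => Real.exp (-(1/2) * (u ⬝ᵥ (Bᵀ * D * B) *ᵥ u))) u₀]
    exact gaussian_integral_posDef _ hM1
  have hι2 : ∫ v : Fin l → ℝ,
      Real.exp (-(1/2) * ((v + v₀) ⬝ᵥ (Aᵀ * D⁻¹ * A) *ᵥ (v + v₀)))
      = (Real.sqrt (((2 * Real.pi)⁻¹ • (Aᵀ * D⁻¹ * A)).det))⁻¹ := by
    rw [MeasureTheory.integral_add_right_eq_self
      (fun v => Real.exp (-(1/2) * (v ⬝ᵥ (Aᵀ * D⁻¹ * A) *ᵥ v))) v₀]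
    exact gaussian_integral_posDef _ hM2
  rw [hι1, hι2]
end
end
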